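/- arXiv:2301.11805 — 7 statements merged into one kernel-verified Lean document; each statement's English description precedes it below -/
import Mathlib

section
/- Let X and Y be separable metric spaces, let ε > 0, and let f : X → Y be a function such that osc_f(x) ≥ ε for all x ∈ X. Then there is a countable subset Q ⊆ X such that osc_{f↾Q}(x) ≥ ε for all x ∈ X. -/
open Filter Topology TopologicalSpace

/-- The pointwise oscillation at `x ∈ X` of (the restriction to `A` of) `f`, valued in
`[0, ∞]`: the infimum over open neighborhoods `U` of `x` of `diam (f '' (U ∩ A))`. -/
noncomputable def osc {X Y : Type*} [TopologicalSpace X] [PseudoMetricSpace Y]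
    (f : X → Y) (A : Set X) (x : X) : ENNReal :=
  ⨅ (U : Set X) (_ : IsOpen U) (_ : x ∈ U), EMetric.diam (f '' (U ∩ A))

/-!
The oscillation at `x` only sees diameters `ediam (f '' (U ∩ A))` for `U` in a countable base,
and each such diameter is already attained on a countable subset of `U ∩ A`, obtained from a
sequence of pairs whose distances approach it. The union of these subsets is `Q`.
-/

open Metric Set

theorem exists_countable_subset_ediam_image_eq {α β : Type*} [PseudoEMetricSpace α]
    (f : β → α) (s : Set β) : ∃ t ⊆ s, t.Countable ∧ ediam (f '' t) = ediam (f '' s) := by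
  rcases s.eq_empty_or_nonempty with rfl | hs
  · exact ⟨∅, subset_rfl, countable_empty, rfl⟩
  have hlub : IsLUB (image2 (fun a b => edist (f a) (f b)) s s) (ediam (f '' s)) := by
    rw [ediam_eq_sSup, image2_image_left, image2_image_right]
    exact isLUB_sSup _
  obtain ⟨u, -, -, hu, hmem⟩ := hlub.exists_seq_monotone_tendsto (hs.image2 hs)
  choose a ha b hb hab using hmem
  have hts : range a ∪ range b ⊆ s :=
    union_subset (range_subset_iff.2 ha) (range_subset_iff.2 hb)
  refine ⟨_, hts, (countable_range a).union (countable_range b),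
    (ediam_mono (image_mono hts)).antisymm (le_of_tendsto' hu fun n => ?_)⟩
  rw [← hab n]
  exact edist_le_ediam_of_mem (mem_image_of_mem f (.inl ⟨n, rfl⟩))
    (mem_image_of_mem f (.inr ⟨n, rfl⟩))

section

variable {X Y : Type*} [TopologicalSpace X] [PseudoMetricSpace Y] {f : X → Y} {A B U : Set X}
  {x : X}

theorem osc_le_ediam (hU : IsOpen U) (hx : x ∈ U) : osc f A x ≤ ediam (f '' (U ∩ A)) :=
  iInf₂_le_of_le U hU (iInf_le _ hx)

theorem osc_mono (hAB : A ⊆ B) : osc f A x ≤ osc f B x :=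
  iInf₂_mono fun _ _ => iInf_mono fun _ =>
    ediam_mono (image_mono (inter_subset_inter_right _ hAB))

theorem exists_countable_subset_osc_eq [SecondCountableTopology X] (f : X → Y) (A : Set X) :
    ∃ Q ⊆ A, Q.Countable ∧ ∀ x, osc f Q x = osc f A x := by
  obtain ⟨b, hbc, -, hb⟩ := exists_countable_basis X
  choose S hSU hSc hS using fun U : b => exists_countable_subset_ediam_image_eq f (U.1 ∩ A)
  have : Countable b := hbc.to_subtype
  have hQA : (⋃ U, S U) ⊆ A := iUnion_subset fun U => (hSU U).trans inter_subset_right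
  refine ⟨⋃ U, S U, hQA, countable_iUnion hSc, fun x => (osc_mono hQA).antisymm ?_⟩
  refine le_iInf₂ fun V hV => le_iInf fun hxV => ?_
  obtain ⟨U, hUb, hxU, hUV⟩ := hb.exists_subset_of_mem_open hxV hV
  calc osc f A x ≤ ediam (f '' (U ∩ A)) := osc_le_ediam (hb.isOpen hUb) hxU
    _ = ediam (f '' S ⟨U, hUb⟩) := (hS ⟨U, hUb⟩).symm
    _ ≤ ediam (f '' (V ∩ ⋃ U, S U)) := by
      refine ediam_mono (image_mono (subset_inter ?_ (subset_iUnion S _)))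
      exact (hSU _).trans (inter_subset_left.trans hUV)

end

theorem exists_countable_osc_ge_general {X Y : Type*} [MetricSpace X] [MetricSpace Y]
    [SeparableSpace X]
    (f : X → Y) (ε : ℝ)
    (h : ∀ x : X, ENNReal.ofReal ε ≤ osc f Set.univ x) :
    ∃ Q : Set X, Q.Countable ∧ ∀ x : X, ENNReal.ofReal ε ≤ osc f Q x := by
  have : SecondCountableTopology X := UniformSpace.secondCountable_of_separable X
  obtain ⟨Q, -, hQc, hQ⟩ := exists_countable_subset_osc_eq f univ
  exact ⟨Q, hQc, fun x => (hQ x).symm ▸ h x⟩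

/-- Let `X, Y` be separable metric spaces, `ε > 0` and `f : X → Y` such that
`osc_f x ≥ ε` for all `x ∈ X`. Then there is a countable `Q ⊆ X` such that
`osc_{f↾Q} x ≥ ε` for all `x ∈ X`. -/
theorem exists_countable_osc_ge {X Y : Type*} [MetricSpace X] [MetricSpace Y]
    [SeparableSpace X] [SeparableSpace Y]
    (f : X → Y) (ε : ℝ) (hε : 0 < ε)
    (h : ∀ x : X, ENNReal.ofReal ε ≤ osc f Set.univ x) :
    ∃ Q : Set X, Q.Countable ∧ ∀ x : X, ENNReal.ofReal ε ≤ osc f Q x :=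
  exists_countable_osc_ge_general f ε h
end

section
/- There exist a separable metrizable space X (which may be taken to be a subset of ℝ with the subspace topology) and a function f : X → {0,1} such that f is not Baire class 1, yet for every nonempty compact subset K of X the restriction f↾K has a point of continuity. In particular, the statement GBT is false (assuming the axiom of choice). -/
open Filter Topology TopologicalSpace

/-- A set is Fσ if it is a countable union of closed sets. -/
def IsFsigma {X : Type*} [TopologicalSpace X] (S : Set X) : Prop :=
  ∃ F : ℕ → Set X, (∀ n, IsClosed (F n)) ∧ S = ⋃ n, F n

/-- `f` is Baire class 1 if preimages of open sets are Fσ. -/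
def BaireClassOne {X Y : Type*} [TopologicalSpace X] [TopologicalSpace Y] (f : X → Y) : Prop :=
  ∀ V : Set Y, IsOpen V → IsFsigma (f ⁻¹' V)

/-- The generalized Baire grand theorem: for all separable metrizable spaces `X, Y`
and every `f : X → Y`, `f` is Baire class 1 iff `f↾K` has a point of continuity for
every nonempty compact `K ⊆ X`. -/
def GBT : Prop :=
  ∀ (X Y : Type) [TopologicalSpace X] [TopologicalSpace Y]
    [SeparableSpace X] [MetrizableSpace X] [SeparableSpace Y] [MetrizableSpace Y],
    ∀ f : X → Y,
      BaireClassOne f ↔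
        ∀ K : Set X, IsCompact K → K.Nonempty →
          ∃ x : K, ContinuousAt (K.restrict f) x


open Cardinal Set Function TopologicalSpace

noncomputable section

def W : Type := (Cardinal.continuum.ord).ToType
noncomputable instance : LinearOrder W := inferInstanceAs (LinearOrder (Cardinal.continuum.ord).ToType)
instance : WellFoundedLT W := inferInstanceAs (WellFoundedLT (Cardinal.continuum.ord).ToType)
lemma mk_W : #W = 𝔠 := Cardinal.mk_ord_toType _
lemma mk_Iio_W (w : W) : #(Set.Iio w) < 𝔠 := Cardinal.mk_Iio_ord_toType (c := Cardinal.continuum) w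

def Kfam : Set (Set ℝ) := {K | IsClosed K ∧ ¬K.Countable}

lemma univ_mem_Kfam : Set.univ ∈ Kfam := ⟨isClosed_univ, Cardinal.not_countable_real⟩

lemma card_of_mem_Kfam {K : Set ℝ} (hK : K ∈ Kfam) : 𝔠 ≤ #K := by
  obtain ⟨f, hrange, -, hinj⟩ := hK.1.exists_nat_bool_injection_of_not_countable hK.2
  have : #(ℕ → Bool) ≤ #K := Cardinal.mk_le_of_injective (f := fun t => (⟨f t, hrange ⟨t, rfl⟩⟩ : K))
    (fun a b h => hinj (congrArg Subtype.val h))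
  rwa [← Cardinal.power_def, Cardinal.mk_bool, Cardinal.mk_nat, Cardinal.two_power_aleph0] at this

lemma card_Kfam : #↥Kfam ≤ 𝔠 := by
  obtain ⟨b, hbc, -, hb⟩ := TopologicalSpace.exists_countable_basis ℝ
  have key : ∀ L : ↥Kfam, (L : Set ℝ)ᶜ = ⋃₀ {s ∈ b | (s : Set ℝ) ∩ (L : Set ℝ) = ∅} := by
    intro L
    have h2 := hb.open_eq_sUnion' (L.2.1.isOpen_compl)
    have h3 : {s ∈ b | s ⊆ (L : Set ℝ)ᶜ} = {s ∈ b | (s : Set ℝ) ∩ (L : Set ℝ) = ∅} := by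
      ext s
      constructor
      · rintro ⟨hs, h⟩
        rw [Set.subset_compl_iff_disjoint_right, Set.disjoint_iff_inter_eq_empty] at h
        exact ⟨hs, h⟩
      · rintro ⟨hs, h⟩
        rw [← Set.disjoint_iff_inter_eq_empty, ← Set.subset_compl_iff_disjoint_right] at h
        exact ⟨hs, h⟩
    rw [h2, h3]
  have hinj : Function.Injective (fun K : ↥Kfam => {s : ↥b | (s : Set ℝ) ∩ (K : Set ℝ) = ∅}) := by
    intro K K' h
    have h' : {s ∈ b | (s : Set ℝ) ∩ (K : Set ℝ) = ∅} = {s ∈ b | (s : Set ℝ) ∩ (K' : Set ℝ) = ∅} := by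
      ext s
      constructor
      · rintro ⟨hs, he⟩
        exact ⟨hs, (Set.ext_iff.mp h ⟨s, hs⟩).mp he⟩
      · rintro ⟨hs, he⟩
        exact ⟨hs, (Set.ext_iff.mp h ⟨s, hs⟩).mpr he⟩
    have : (K : Set ℝ)ᶜ = (K' : Set ℝ)ᶜ := by rw [key K, key K', h']
    exact Subtype.ext (compl_injective this)
  calc #↥Kfam ≤ #(Set ↥b) := Cardinal.mk_le_of_injective hinj
    _ = 2 ^ #↥b := Cardinal.mk_set
    _ ≤ 2 ^ ℵ₀ := by
        apply Cardinal.power_le_power_left (by norm_num)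
        exact (Cardinal.le_aleph0_iff_set_countable.mpr hbc)
    _ = 𝔠 := Cardinal.two_power_aleph0

def emb : ↥Kfam ↪ W :=
  Classical.choice ((Cardinal.le_def _ _).mp (le_of_le_of_eq card_Kfam mk_W.symm))

open Classical in
def sig (w : W) : Set ℝ := if h : ∃ K : ↥Kfam, emb K = w then ↑h.choose else Set.univ

lemma sig_mem (w : W) : sig w ∈ Kfam := by
  classical
  unfold sig
  split
  next h => exact h.choose.2
  next => exact univ_mem_Kfam

lemma sig_surj {K : Set ℝ} (hK : K ∈ Kfam) : ∃ w, sig w = K := by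
  classical
  refine ⟨emb ⟨K, hK⟩, ?_⟩
  have h : ∃ L : ↥Kfam, emb L = emb ⟨K, hK⟩ := ⟨⟨K, hK⟩, rfl⟩
  rw [sig, dif_pos h]
  exact congrArg Subtype.val (emb.injective h.choose_spec)
-- standalone test of exists3 and cardinal arithmetic
lemma diff_ne {S T : Set ℝ} (hS : 𝔠 ≤ #S) (hT : #T < 𝔠) : (S \ T).Nonempty := by
  rw [Set.nonempty_iff_ne_empty]
  intro h
  have hsub : S ⊆ T := by
    intro x hx
    by_contra hxT
    exact (Set.eq_empty_iff_forall_notMem.mp h x) ⟨hx, hxT⟩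
  exact absurd (hS.trans (Cardinal.mk_le_mk_of_subset hsub)) hT.not_ge

lemma insert_lt {T : Set ℝ} (x : ℝ) (hT : #T < 𝔠) : #(insert x T : Set ℝ) < 𝔠 := by
  calc #(insert x T : Set ℝ) ≤ #T + 1 := Cardinal.mk_insert_le
    _ < 𝔠 := Cardinal.add_lt_of_lt Cardinal.aleph0_le_continuum hT (Cardinal.one_lt_aleph0.trans_le Cardinal.aleph0_le_continuum)

lemma exists3 {S T : Set ℝ} (hS : 𝔠 ≤ #S) (hT : #T < 𝔠) :
    ∃ q : Fin 3 → ℝ, Function.Injective q ∧ ∀ i, q i ∈ S ∧ q i ∉ T := by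
  obtain ⟨p0, hp0S, hp0T⟩ := diff_ne hS hT
  obtain ⟨p1, hp1S, hp1T⟩ := diff_ne hS (insert_lt p0 hT)
  obtain ⟨p2, hp2S, hp2T⟩ := diff_ne hS (insert_lt p1 (insert_lt p0 hT))
  refine ⟨![p0, p1, p2], ?_, ?_⟩
  · have h10 : p1 ≠ p0 := fun h => hp1T (h ▸ Set.mem_insert _ _)
    have h21 : p2 ≠ p1 := fun h => hp2T (h ▸ Set.mem_insert _ _)
    have h20 : p2 ≠ p0 := fun h => hp2T (Set.mem_insert_iff.mpr (Or.inr (h ▸ Set.mem_insert _ _)))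
    intro i j hij
    fin_cases i <;> fin_cases j <;> simp_all
  · intro i
    fin_cases i
    · exact ⟨hp0S, hp0T⟩
    · exact ⟨hp1S, fun h => hp1T (Set.mem_insert_iff.mpr (Or.inr h))⟩
    · exact ⟨hp2S, fun h => hp2T (Set.mem_insert_iff.mpr (Or.inr (Set.mem_insert_iff.mpr (Or.inr h))))⟩

def prevT (w : W) (IH : ∀ v, v < w → (Fin 3 → ℝ)) : Set ℝ :=
  Set.range (fun v : Set.Iio w => IH v v.2 0) ∪
    (Set.range (fun v : Set.Iio w => IH v v.2 1) ∪ Set.range (fun v : Set.Iio w => IH v v.2 2))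

lemma prevT_lt (w : W) (IH : ∀ v, v < w → (Fin 3 → ℝ)) : #(prevT w IH) < 𝔠 := by
  have hr : ∀ j : Fin 3, #(Set.range (fun v : Set.Iio w => IH v v.2 j)) < 𝔠 :=
    fun j => (Cardinal.mk_range_le).trans_lt (mk_Iio_W w)
  have h2 : #(Set.range (fun v : Set.Iio w => IH v v.2 1) ∪
      Set.range (fun v : Set.Iio w => IH v v.2 2) : Set ℝ) < 𝔠 :=
    (Cardinal.mk_union_le _ _).trans_lt
      (Cardinal.add_lt_of_lt Cardinal.aleph0_le_continuum (hr 1) (hr 2))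
  exact (Cardinal.mk_union_le _ _).trans_lt
    (Cardinal.add_lt_of_lt Cardinal.aleph0_le_continuum (hr 0) h2)

def G : W → (Fin 3 → ℝ) :=
  (wellFounded_lt (α := W)).fix
    (fun w IH => (exists3 (card_of_mem_Kfam (sig_mem w)) (prevT_lt w IH)).choose)

lemma G_spec (w : W) : Function.Injective (G w) ∧
    ∀ i, G w i ∈ sig w ∧ G w i ∉ prevT w (fun v _ => G v) := by
  have h := (wellFounded_lt (α := W)).fix_eq
    (fun w IH => (exists3 (card_of_mem_Kfam (sig_mem w)) (prevT_lt w IH)).choose) w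
  have h2 : G w = (exists3 (card_of_mem_Kfam (sig_mem w))
      (prevT_lt w (fun v _ => G v))).choose := h
  rw [h2]
  exact (exists3 (card_of_mem_Kfam (sig_mem w)) (prevT_lt w (fun v _ => G v))).choose_spec

lemma G_ne_of_lt {v w : W} (h : v < w) (i j : Fin 3) : G w i ≠ G v j := by
  intro he
  apply ((G_spec w).2 i).2
  rw [he]
  have hm : ∀ j : Fin 3, G v j ∈ Set.range (fun u : Set.Iio w => G u.1 j) :=
    fun j => ⟨⟨v, h⟩, rfl⟩
  fin_cases j
  · exact Or.inl (hm 0)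
  · exact Or.inr (Or.inl (hm 1))
  · exact Or.inr (Or.inr (hm 2))

lemma G_ne {v w : W} {i j : Fin 3} (h : v ≠ w ∨ i ≠ j) : G v i ≠ G w j := by
  rcases lt_trichotomy v w with hlt | heq | hgt
  · exact (G_ne_of_lt hlt j i).symm
  · subst heq
    rcases h with h | h
    · exact absurd rfl h
    · exact fun he => h ((G_spec v).1 he)
  · exact G_ne_of_lt hgt i j

def piece (i : Fin 3) : Set ℝ := Set.range (fun w => G w i)

lemma piece_uncountable (i : Fin 3) : ¬ (piece i).Countable := by
  intro hc
  have hinj : Function.Injective (fun w => G w i) := by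
    intro v w h
    by_contra hne
    exact G_ne (Or.inl hne) h
  have : #(piece i) = 𝔠 := by rw [piece, Cardinal.mk_range_eq _ hinj, mk_W]
  rw [← Cardinal.le_aleph0_iff_set_countable, this] at hc
  exact Cardinal.aleph0_lt_continuum.not_ge hc

lemma piece_disjoint {i j : Fin 3} (hij : i ≠ j) {x : ℝ} (hi : x ∈ piece i) (hj : x ∈ piece j) :
    False := by
  obtain ⟨v, rfl⟩ := hi
  obtain ⟨w, hw⟩ := hj
  exact G_ne (Or.inr hij) hw.symm

lemma piece_meets {K : Set ℝ} (hK : K ∈ Kfam) (i : Fin 3) : ∃ x, x ∈ K ∧ x ∈ piece i := by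
  obtain ⟨w, hw⟩ := sig_surj hK
  exact ⟨G w i, hw ▸ ((G_spec w).2 i).1, ⟨w, rfl⟩⟩

def BSet : Set ℝ := piece 0 ∪ piece 1

open Classical in
def fB : ↥BSet → Bool := fun x => decide ((x : ℝ) ∈ piece 0)

lemma fB_not_baire : ¬ BaireClassOne fB := by
  classical
  intro hB
  obtain ⟨F, hFc, hFe⟩ := hB {true} (isOpen_discrete _)
  have hpre : fB ⁻¹' {true} = Subtype.val ⁻¹' (piece 0) := by
    ext x
    simp [fB]
  choose Gn hGnc hGne using fun n => isClosed_induced_iff.mp (hFc n)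
  have hGcnt : ∀ n, (Gn n).Countable := by
    intro n
    by_contra hunc
    obtain ⟨x, hxG, hxp⟩ := piece_meets ⟨hGnc n, hunc⟩ 1
    have hxB : x ∈ BSet := Or.inr hxp
    have hxF : (⟨x, hxB⟩ : ↥BSet) ∈ F n := by rw [← hGne n]; exact hxG
    have hxU : (⟨x, hxB⟩ : ↥BSet) ∈ fB ⁻¹' {true} := by rw [hFe]; exact Set.mem_iUnion.mpr ⟨n, hxF⟩
    rw [hpre] at hxU
    exact piece_disjoint (by decide) hxU hxp
  have hsub : piece 0 ⊆ ⋃ n, Gn n := by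
    intro a ha
    have haB : a ∈ BSet := Or.inl ha
    have : (⟨a, haB⟩ : ↥BSet) ∈ fB ⁻¹' {true} := by rw [hpre]; exact ha
    rw [hFe] at this
    obtain ⟨n, hn⟩ := Set.mem_iUnion.mp this
    rw [← hGne n] at hn
    exact Set.mem_iUnion.mpr ⟨n, hn⟩
  exact piece_uncountable 0 ((Set.countable_iUnion hGcnt).mono hsub)

lemma fB_compact_cont :
    ∀ K : Set ↥BSet, IsCompact K → K.Nonempty → ∃ x : K, ContinuousAt (K.restrict fB) x := by
  intro K hK hne
  set J : Set ℝ := Subtype.val '' K with hJ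
  have hJcpt : IsCompact J := hK.image continuous_subtype_val
  have hJcl : IsClosed J := hJcpt.isClosed
  have hJcnt : J.Countable := by
    by_contra hunc
    obtain ⟨x, hxJ, hxp⟩ := piece_meets ⟨hJcl, hunc⟩ 2
    obtain ⟨x0, -, rfl⟩ := hxJ
    rcases x0.2 with h | h
    · exact piece_disjoint (by decide) h hxp
    · exact piece_disjoint (by decide) h hxp
  have hJne : J.Nonempty := hne.image _
  -- find an isolated point of J
  have hiso : ∃ x ∈ J, ¬ AccPt x (Filter.principal J) := by
    by_contra hacc
    push_neg at hacc
    have hperf : Perfect J := ⟨hJcl, hacc⟩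
    obtain ⟨g, hgr, -, hginj⟩ := hperf.exists_nat_bool_injection hJne
    have h1 : #(Set.range g) = 𝔠 := by
      rw [Cardinal.mk_range_eq _ hginj, ← Cardinal.power_def, Cardinal.mk_bool,
        Cardinal.mk_nat, Cardinal.two_power_aleph0]
    have h2 : #(Set.range g) ≤ ℵ₀ :=
      Cardinal.le_aleph0_iff_set_countable.mpr (hJcnt.mono hgr)
    rw [h1] at h2
    exact Cardinal.aleph0_lt_continuum.not_ge h2
  obtain ⟨x, hxJ, hnacc⟩ := hiso
  rw [accPt_iff_nhds] at hnacc
  push_neg at hnacc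
  obtain ⟨U, hU, hUx⟩ := hnacc
  obtain ⟨x0, hx0K, hx0v⟩ := hxJ
  refine ⟨⟨x0, hx0K⟩, ?_⟩
  have hval : Continuous (fun y : ↥K => ((y : ↥BSet) : ℝ)) :=
    continuous_subtype_val.comp continuous_subtype_val
  have hnhds : 𝓝 (⟨x0, hx0K⟩ : ↥K) = pure ⟨x0, hx0K⟩ := by
    refine le_antisymm ?_ (pure_le_nhds _)
    rw [Filter.le_pure_iff]
    have hUm : (fun y : ↥K => ((y : ↥BSet) : ℝ)) ⁻¹' U ∈ 𝓝 (⟨x0, hx0K⟩ : ↥K) := by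
      apply hval.continuousAt.preimage_mem_nhds
      show U ∈ 𝓝 ((x0 : ℝ))
      rw [hx0v]
      exact hU
    refine Filter.mem_of_superset hUm ?_
    intro y hy
    have hyJ : ((y : ↥BSet) : ℝ) ∈ J := ⟨y, y.2, rfl⟩
    have : ((y : ↥BSet) : ℝ) = x := hUx _ ⟨hy, hyJ⟩
    have hyx : ((y : ↥BSet) : ℝ) = (x0 : ℝ) := by rw [this, hx0v]
    have : (y : ↥BSet) = x0 := Subtype.ext hyx
    exact Subtype.ext this
  rw [ContinuousAt, hnhds]
  exact Filter.tendsto_pure_left.mpr fun s hs => mem_of_mem_nhds hs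


end

/-- (Under the axiom of choice, built into Lean/Mathlib.) There are a separable
metrizable space `X` (a subset of `ℝ` with the subspace topology) and a function
`f : X → {0,1}` which is not Baire class 1, yet whose restriction to every nonempty
compact `K ⊆ X` has a point of continuity. In particular, `GBT` is false. -/
theorem GBT_false :
    (∃ (X : Set ℝ) (f : X → Bool),
      ¬ BaireClassOne f ∧
      ∀ K : Set X, IsCompact K → K.Nonempty →
        ∃ x : K, ContinuousAt (K.restrict f) x) ∧
    ¬ GBT := by
  constructor
  · exact ⟨BSet, fB, fB_not_baire, fB_compact_cont⟩
  · intro hGBT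
    exact fB_not_baire ((hGBT ↥BSet Bool fB).mpr fB_compact_cont)
end

section
/- There exists a set X ⊆ ℝ of cardinality the continuum such that X does not contain any uncountable closed subset of ℝ; that is, every closed subset of ℝ contained in X is countable. -/
open Cardinal Set Function

namespace BernsteinAux

/-- The type of uncountable closed subsets of `ℝ`. -/
def UCC : Type := {C : Set ℝ // IsClosed C ∧ ¬ C.Countable}

lemma continuum_le_mk_of_ucc {C : Set ℝ} (hcl : IsClosed C) (hunc : ¬ C.Countable) :
    Cardinal.continuum ≤ #C := by
  obtain ⟨f, hfC, -, hfinj⟩ := hcl.exists_nat_bool_injection_of_not_countable hunc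
  have h1 : #(ℕ → Bool) ≤ #C :=
    mk_le_of_injective (f := fun x => (⟨f x, hfC (mem_range_self x)⟩ : C))
      (fun a b hab => hfinj (congrArg Subtype.val hab))
  have h2 : #(ℕ → Bool) = Cardinal.continuum := by
    simp [Cardinal.mk_arrow, Cardinal.two_power_aleph0]
  rwa [h2] at h1

lemma ucc_nonempty (u : UCC) : u.1.Nonempty := by
  rcases u with ⟨C, hcl, hunc⟩
  rw [Set.nonempty_iff_ne_empty]
  rintro rfl
  exact hunc countable_empty

lemma mk_ucc_le : #UCC ≤ Cardinal.continuum := by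
  have key : ∀ u : UCC, ∃ f : ℕ → ℝ, closure (range f) = u.1 := by
    intro u
    have hne : u.1.Nonempty := ucc_nonempty u
    haveI : Nonempty u.1 := hne.to_subtype
    obtain ⟨s, hsc, hsd⟩ := TopologicalSpace.exists_countable_dense (↥u.1)
    have hsne : s.Nonempty := hsd.nonempty
    obtain ⟨g, hg⟩ := hsc.exists_eq_range hsne
    refine ⟨fun n => (g n : ℝ), ?_⟩
    have hrange : range (fun n => ((g n : ℝ))) = Subtype.val '' s := by
      rw [hg, ← Set.range_comp]; rfl
    rw [hrange]
    apply subset_antisymm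
    · exact u.2.1.closure_subset_iff.2 (by rintro x ⟨y, -, rfl⟩; exact y.2)
    · intro x hx
      have : (⟨x, hx⟩ : u.1) ∈ closure s := hsd.closure_eq ▸ mem_univ _
      exact closure_subtype.1 this
  choose f hf using key
  have hinj : Injective f := by
    intro u v h
    exact Subtype.ext (by rw [← hf u, ← hf v, h])
  calc #UCC ≤ #(ℕ → ℝ) := mk_le_of_injective hinj
    _ = Cardinal.continuum := by
        simp [Cardinal.mk_arrow, Cardinal.mk_real, Cardinal.continuum_power_aleph0]

lemma exists_pair {S A : Set ℝ} (hS : Cardinal.continuum ≤ #S) (hA : #A < Cardinal.continuum) :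
    ∃ p : ℝ × ℝ, p.1 ∈ S ∧ p.2 ∈ S ∧ p.1 ≠ p.2 ∧ p.1 ∉ A ∧ p.2 ∉ A := by
  have hsub : S ⊆ (S \ A) ∪ A := fun x hx => by
    by_cases h : x ∈ A
    · exact Or.inr h
    · exact Or.inl ⟨hx, h⟩
  have hbig : Cardinal.continuum ≤ #(S \ A : Set ℝ) := by
    by_contra h
    push_neg at h
    have : #S ≤ #(S \ A : Set ℝ) + #A :=
      (mk_le_mk_of_subset hsub).trans (mk_union_le _ _)
    have hlt : #(S \ A : Set ℝ) + #A < Cardinal.continuum :=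
      Cardinal.add_lt_of_lt Cardinal.aleph0_le_continuum h hA
    exact absurd (hS.trans this) hlt.not_ge
  have h1 : (1 : Cardinal) < #(S \ A : Set ℝ) :=
    lt_of_lt_of_le (by exact_mod_cast Cardinal.nat_lt_continuum 1) hbig
  rw [Cardinal.one_lt_iff_nontrivial] at h1
  obtain ⟨⟨a, ha⟩, ⟨b, hb⟩, hab⟩ := h1
  exact ⟨(a, b), ha.1, hb.1, by simpa [Subtype.ext_iff] using hab, ha.2, hb.2⟩

/-- The index type: a well-order of order type the initial ordinal of the continuum. -/
abbrev T : Type := Cardinal.continuum.ord.ToType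

/-- Points to avoid at stage `i`, given previous choices. -/
def avoided (i : T) (prev : ∀ j, j < i → ℝ × ℝ) : Set ℝ :=
  (range fun j : Iio i => (prev j j.2).1) ∪ (range fun j : Iio i => (prev j j.2).2)

lemma avoided_lt (i : T) (prev : ∀ j, j < i → ℝ × ℝ) :
    #(avoided i prev) < Cardinal.continuum := by
  refine lt_of_le_of_lt (mk_union_le _ _) ?_
  exact Cardinal.add_lt_of_lt Cardinal.aleph0_le_continuum
    (mk_range_le.trans_lt (Cardinal.mk_Iio_ord_toType i))
    (mk_range_le.trans_lt (Cardinal.mk_Iio_ord_toType i))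

/-- Transfinite recursion choosing pairs of fresh points in each uncountable closed set. -/
noncomputable def F (g : T → UCC) : T → ℝ × ℝ :=
  (IsWellFounded.wf (α := T) (r := (· < ·))).fix fun i prev =>
    Classical.choose (exists_pair (continuum_le_mk_of_ucc (g i).2.1 (g i).2.2)
      (avoided_lt i prev))

lemma F_eq (g : T → UCC) (i : T) :
    F g i = Classical.choose (exists_pair (continuum_le_mk_of_ucc (g i).2.1 (g i).2.2)
      (avoided_lt i (fun j _ => F g j))) :=
  WellFounded.fix_eq _ _ _

lemma F_spec (g : T → UCC) (i : T) :
    (F g i).1 ∈ (g i).1 ∧ (F g i).2 ∈ (g i).1 ∧ (F g i).1 ≠ (F g i).2 ∧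
      (F g i).1 ∉ avoided i (fun j _ => F g j) ∧
      (F g i).2 ∉ avoided i (fun j _ => F g j) := by
  have h := Classical.choose_spec (exists_pair (continuum_le_mk_of_ucc (g i).2.1 (g i).2.2)
    (avoided_lt i (fun j _ => F g j)))
  rwa [← F_eq] at h

lemma mem_avoided_fst (g : T → UCC) {j i : T} (h : j < i) :
    (F g j).1 ∈ avoided i (fun j _ => F g j) :=
  Or.inl ⟨⟨j, h⟩, rfl⟩

lemma mem_avoided_snd (g : T → UCC) {j i : T} (h : j < i) :
    (F g j).2 ∈ avoided i (fun j _ => F g j) :=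
  Or.inr ⟨⟨j, h⟩, rfl⟩

lemma fst_ne_snd (g : T → UCC) (i j : T) : (F g i).1 ≠ (F g j).2 := by
  rcases lt_trichotomy i j with h | rfl | h
  · exact fun e => (F_spec g j).2.2.2.2 (e ▸ mem_avoided_fst g h)
  · exact (F_spec g i).2.2.1
  · exact fun e => (F_spec g i).2.2.2.1 (e.symm ▸ mem_avoided_snd g h)

lemma snd_injective (g : T → UCC) : Injective fun i => (F g i).2 := by
  intro i j h
  by_contra hne
  have h' : (F g i).2 = (F g j).2 := h
  rcases lt_or_gt_of_ne hne with hlt | hlt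
  · exact (F_spec g j).2.2.2.2 (h' ▸ mem_avoided_snd g hlt)
  · exact (F_spec g i).2.2.2.2 (h'.symm ▸ mem_avoided_snd g hlt)

end BernsteinAux

open BernsteinAux Cardinal Set Function in
/-- There is a set of reals of cardinality the continuum that contains no uncountable
closed subset of `ℝ`: every closed set of reals contained in it is countable. -/
theorem exists_continuum_set_no_uncountable_closed_subset :
    ∃ X : Set ℝ, Cardinal.mk X = Cardinal.continuum ∧
      ∀ C : Set ℝ, C ⊆ X → IsClosed C → C.Countable := by
  classical
  have huccne : Nonempty UCC := by
    refine ⟨⟨Icc 0 1, isClosed_Icc, ?_⟩⟩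
    intro h
    have : #(Icc (0:ℝ) 1) ≤ ℵ₀ := h.le_aleph0
    rw [Cardinal.mk_Icc_real (by norm_num : (0:ℝ) < 1)] at this
    exact absurd this Cardinal.aleph0_lt_continuum.not_ge
  -- a surjection from `T` onto the uncountable closed sets
  obtain ⟨e⟩ : Nonempty (UCC ↪ T) := by
    rw [← Cardinal.le_def, Cardinal.mk_ord_toType]
    exact mk_ucc_le
  set g : T → UCC := Function.invFun e with hg
  have hgsurj : Surjective g := Function.invFun_surjective e.injective
  set A : Set ℝ := range fun i => (F g i).1 with hA
  refine ⟨Aᶜ, ?_, ?_⟩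
  · apply le_antisymm
    · rw [← Cardinal.mk_real]
      exact Cardinal.mk_set_le _
    · have hmem : ∀ i : T, (F g i).2 ∈ Aᶜ := by
        intro i hmem
        obtain ⟨j, hj⟩ := hmem
        exact fst_ne_snd g j i hj
      have hinj : Injective fun i : T => (⟨(F g i).2, hmem i⟩ : ↥(Aᶜ)) := by
        intro i j h
        have : (F g i).2 = (F g j).2 := congrArg Subtype.val h
        exact snd_injective g this
      calc Cardinal.continuum = #T := (Cardinal.mk_ord_toType _).symm
        _ ≤ _ := mk_le_of_injective hinj
  · intro C hsub hcl
    by_contra hunc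
    obtain ⟨i, hi⟩ := hgsurj ⟨C, hcl, hunc⟩
    have h1 : (F g i).1 ∈ C := by
      have := (F_spec g i).1
      rwa [hi] at this
    exact hsub h1 ⟨i, rfl⟩
end

section
/- GBT implies WHSP: if for all separable metrizable spaces X, Y and every function f : X → Y it holds that f is Baire class 1 if and only if f↾K has a point of continuity for every nonempty compact K ⊆ X, then for all disjoint A, B ⊆ ℕ^ℕ such that no F_σ subset of ℕ^ℕ separates A from B, there is a Cantor set C ⊆ A ∪ B such that C ∩ A is both dense and codense in C. -/
open Filter Topology TopologicalSpace

/-- A Cantor set in the Baire space: a subset homeomorphic (with the subspace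
topology) to the Cantor space `2^ℕ`. -/
def IsCantorSet (C : Set (ℕ → ℕ)) : Prop :=
  Nonempty (C ≃ₜ (ℕ → Bool))

/-- The weak Hurewicz separation property: for all disjoint `A, B ⊆ ℕ^ℕ` such that no
Fσ set separates `A` from `B`, there is a Cantor set `C ⊆ A ∪ B` with `C ∩ A` both
dense and codense in `C`. -/
def WHSP : Prop :=
  ∀ A B : Set (ℕ → ℕ), Disjoint A B →
    (¬ ∃ S : Set (ℕ → ℕ), IsFsigma S ∧ A ⊆ S ∧ B ∩ S = ∅) →
    ∃ C : Set (ℕ → ℕ), IsCantorSet C ∧ C ⊆ A ∪ B ∧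
      Dense {x : C | (x : ℕ → ℕ) ∈ A} ∧ Dense {x : C | (x : ℕ → ℕ) ∉ A}

/-!
Apply GBT to the indicator `f` of `A` on the subspace `A ∪ B`. If `f` were Baire class one,
`f⁻¹{true} = A` would be Fσ in `A ∪ B`, i.e. the trace of an Fσ subset of `ℕ^ℕ` separating `A`
from `B`. So there is a nonempty compact `K ⊆ A ∪ B` on which `f` is nowhere continuous: both
`K ∩ A` and `K \ A` are dense in `K`. A Cantor scheme inside `K` then refines every point, at
any precision, into a point of `A` and a point outside `A`, keeping the point itself whenever
it already lies on the required side. Each branch converges to a point of `K`, and eventually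
constant branches stabilise, so branches ending in `false`s (resp. `true`s), which are dense in
`2^ℕ`, land outside `A` (resp. in `A`).
-/

open Function Set PiNat

theorem PiNat.mem_closure_iff_forall_cylinder_inter_nonempty {E : ℕ → Type*}
    [∀ n, TopologicalSpace (E n)] [∀ n, DiscreteTopology (E n)] {s : Set (∀ n, E n)}
    {x : ∀ n, E n} : x ∈ closure s ↔ ∀ n, (cylinder x n ∩ s).Nonempty := by
  rw [(isTopologicalBasis_cylinders E).mem_closure_iff]
  refine ⟨fun h n => h _ ⟨x, n, rfl⟩ (self_mem_cylinder x n), ?_⟩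
  rintro h _ ⟨y, n, rfl⟩ hx
  rw [← mem_cylinder_iff_eq.1 hx]
  exact h n

theorem mem_closure_ne_of_not_continuousAt {X Y : Type*} [TopologicalSpace X]
    [TopologicalSpace Y] [DiscreteTopology Y] {f : X → Y} {x : X} (h : ¬ContinuousAt f x) :
    x ∈ closure {y | f y ≠ f x} := by
  rw [mem_closure_iff_frequently]
  contrapose! h
  rw [ContinuousAt, nhds_discrete Y, tendsto_pure]
  simpa using h

theorem dense_preimage_of_forall_not_continuousAt {X : Type*} [TopologicalSpace X]
    {f : X → Bool} (h : ∀ x, ¬ContinuousAt f x) (b : Bool) : Dense (f ⁻¹' {b}) := by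
  intro x
  by_cases hx : f x = b
  · exact subset_closure hx
  · refine closure_mono (fun y hy => ?_) (mem_closure_ne_of_not_continuousAt (h x))
    cases b <;> simp_all

theorem Continuous.range_subset_closure_range_inter {Z Y : Type*} [TopologicalSpace Z]
    [TopologicalSpace Y] {e : Z → Y} (he : Continuous e) {t : Set Y} (ht : Dense (e ⁻¹' t)) :
    range e ⊆ closure (range e ∩ t) :=
  image_preimage_eq_range_inter ▸ he.range_subset_closure_image_dense ht

theorem IsFsigma.exists_isFsigma_preimage_val_eq {Y : Type*} [TopologicalSpace Y] {U : Set Y}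
    {s : Set U} (hs : IsFsigma s) : ∃ S : Set Y, IsFsigma S ∧ (↑) ⁻¹' S = s := by
  obtain ⟨F, hF, rfl⟩ := hs
  choose C hC hCF using fun n => isClosed_induced_iff.1 (hF n)
  exact ⟨⋃ n, C n, ⟨C, hC, rfl⟩, by simp only [preimage_iUnion, hCF]⟩

theorem exists_isFsigma_separating_of_isFsigma_subtype {Y : Type*} [TopologicalSpace Y]
    {A B : Set Y} (hAB : Disjoint A B) (hA : IsFsigma {x : ↥(A ∪ B) | (x : Y) ∈ A}) :
    ∃ S : Set Y, IsFsigma S ∧ A ⊆ S ∧ B ∩ S = ∅ := by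
  obtain ⟨S, hS, hSA⟩ := hA.exists_isFsigma_preimage_val_eq
  have hmem : ∀ x (hx : x ∈ A ∪ B), x ∈ S ↔ x ∈ A := fun x hx => Set.ext_iff.1 hSA ⟨x, hx⟩
  refine ⟨S, hS, fun x hx => (hmem x (.inl hx)).2 hx, ?_⟩
  exact eq_empty_of_forall_notMem fun x ⟨hB, hxS⟩ =>
    disjoint_left.1 hAB ((hmem x (.inr hB)).1 hxS) hB

structure ColorSplitting {α : Type*} (K : Set (ℕ → α)) (χ : (ℕ → α) → Bool) where
  next : K → ℕ → Bool → K
  next_mem_cylinder (p : K) (m : ℕ) (b : Bool) : (next p m b : ℕ → α) ∈ cylinder (p : ℕ → α) m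
  color_next (p : K) (m : ℕ) (b : Bool) : χ (next p m b) = b
  next_of_color_eq (p : K) (m : ℕ) (b : Bool) : χ p = b → next p m b = p

namespace ColorSplitting

variable {α : Type*} {K : Set (ℕ → α)} {χ : (ℕ → α) → Bool}

theorem nonempty_of_subset_closure [TopologicalSpace α] [DiscreteTopology α]
    (hχ : ∀ b, K ⊆ closure (K ∩ χ ⁻¹' {b})) : Nonempty (ColorSplitting K χ) := by
  have split : ∀ (p : K) (m : ℕ) (b : Bool),
      ∃ q : K, (q : ℕ → α) ∈ cylinder (p : ℕ → α) m ∧ χ q = b ∧ (χ p = b → q = p) := by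
    intro p m b
    by_cases hp : χ p = b
    · exact ⟨p, self_mem_cylinder _ _, hp, fun _ => rfl⟩
    · obtain ⟨q, hqp, hqK, hq⟩ :=
        mem_closure_iff.1 (hχ b p.2) _ (isOpen_cylinder _ _ _) (self_mem_cylinder _ m)
      exact ⟨⟨q, hqK⟩, hqp, hq, fun h => absurd h hp⟩
  choose next hcyl hcolor hfix using split
  exact ⟨⟨next, hcyl, hcolor, hfix⟩⟩

variable (s : ColorSplitting K χ)

noncomputable def sepIndex (p : K) (m : ℕ) : ℕ :=
  firstDiff (s.next p m false : ℕ → α) (s.next p m true)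

/-- A node of the scheme is a point together with the length of its cylinder; passing to a
child beyond `sepIndex` makes the cylinders of the two children disjoint. -/
noncomputable def step (x : K × ℕ) (b : Bool) : K × ℕ :=
  (s.next x.1 x.2 b, s.sepIndex x.1 x.2 + 1)

noncomputable def run (p₀ : K) (y : ℕ → Bool) : ℕ → K × ℕ
  | 0 => (p₀, 0)
  | n + 1 => s.step (run p₀ y n) (y n)

noncomputable def limit (p₀ : K) (y : ℕ → Bool) : ℕ → α :=
  fun i => ((s.run p₀ y (i + 1)).1 : ℕ → α) i

variable {s} {p₀ : K} {y y' : ℕ → Bool} {n : ℕ}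

theorem run_succ : s.run p₀ y (n + 1) = s.step (s.run p₀ y n) (y n) := rfl

theorem next_false_ne_next_true (p : K) (m : ℕ) :
    (s.next p m false : ℕ → α) ≠ s.next p m true := fun h => by
  simpa [s.color_next] using congrArg χ h

theorem next_apply_sepIndex_ne (p : K) (m : ℕ) {b b' : Bool} (h : b ≠ b') :
    (s.next p m b : ℕ → α) (s.sepIndex p m) ≠ (s.next p m b' : ℕ → α) (s.sepIndex p m) := by
  have := apply_firstDiff_ne (s.next_false_ne_next_true p m)
  cases b <;> cases b' <;> simp_all [sepIndex, eq_comm]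

theorem le_sepIndex (p : K) (m : ℕ) : m ≤ s.sepIndex p m := by
  by_contra! hlt
  exact apply_firstDiff_ne (s.next_false_ne_next_true p m) <|
    ((s.next_mem_cylinder p m false) _ hlt).trans ((s.next_mem_cylinder p m true) _ hlt).symm

theorem run_congr (h : y' ∈ cylinder y n) : s.run p₀ y' n = s.run p₀ y n := by
  induction n with
  | zero => rfl
  | succ n ih => rw [run_succ, run_succ, ih (cylinder_anti y n.le_succ h), h n n.lt_succ_self]

theorem le_run_snd : n ≤ (s.run p₀ y n).2 := by
  induction n with
  | zero => exact le_rfl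
  | succ n ih => exact Nat.succ_le_succ (ih.trans (s.le_sepIndex _ _))

theorem monotone_run_snd : Monotone fun n => (s.run p₀ y n).2 :=
  monotone_nat_of_le_succ fun n => (s.le_sepIndex (s.run p₀ y n).1 (s.run p₀ y n).2).step

theorem run_fst_mem_cylinder {k : ℕ} (h : n ≤ k) :
    ((s.run p₀ y k).1 : ℕ → α) ∈ cylinder ((s.run p₀ y n).1 : ℕ → α) (s.run p₀ y n).2 := by
  induction k, h using Nat.le_induction with
  | base => exact self_mem_cylinder _ _
  | succ k hnk ih =>
    rw [← mem_cylinder_iff_eq.1 ih]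
    exact cylinder_anti _ (s.monotone_run_snd hnk) (s.next_mem_cylinder _ _ _)

theorem limit_mem_cylinder :
    s.limit p₀ y ∈ cylinder ((s.run p₀ y n).1 : ℕ → α) (s.run p₀ y n).2 := by
  intro i hi
  have hn := s.run_fst_mem_cylinder (p₀ := p₀) (y := y) (le_max_left n (i + 1))
  have hi' := s.run_fst_mem_cylinder (p₀ := p₀) (y := y) (le_max_right n (i + 1))
  exact (hi' i (i.lt_succ_self.trans_le le_run_snd)).symm.trans (hn i hi)

theorem limit_mem_cylinder_limit (h : y' ∈ cylinder y n) :
    s.limit p₀ y' ∈ cylinder (s.limit p₀ y) n :=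
  fun i hi => by rw [limit, limit, run_congr (cylinder_anti y hi h)]

theorem limit_mem [TopologicalSpace α] [DiscreteTopology α] (hK : IsClosed K) :
    s.limit p₀ y ∈ K := by
  refine hK.closure_subset (mem_closure_iff_forall_cylinder_inter_nonempty.2 fun n => ?_)
  refine ⟨_, ?_, (s.run p₀ y n).1.2⟩
  exact (mem_cylinder_comm _ _ _).1 (cylinder_anti _ le_run_snd limit_mem_cylinder)

theorem continuous_limit [TopologicalSpace α] [DiscreteTopology α] : Continuous (s.limit p₀) :=
  continuous_pi fun i => IsLocallyConstant.continuous <|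
    (IsLocallyConstant.iff_exists_open _).2 fun y =>
      ⟨cylinder y (i + 1), isOpen_cylinder _ _ _, self_mem_cylinder _ _,
        fun _ hy' => limit_mem_cylinder_limit hy' i i.lt_succ_self⟩

theorem limit_injective : Injective (s.limit p₀) := by
  intro y y' h
  by_contra hne
  set n := firstDiff y y'
  have hrun : s.run p₀ y' n = s.run p₀ y n :=
    run_congr fun i hi => (apply_eq_of_lt_firstDiff hi).symm
  have hy := s.limit_mem_cylinder (p₀ := p₀) (y := y) (n := n + 1)
  have hy' := s.limit_mem_cylinder (p₀ := p₀) (y := y') (n := n + 1)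
  rw [run_succ, hrun] at hy'
  have hlt := lt_add_one (s.sepIndex (s.run p₀ y n).1 (s.run p₀ y n).2)
  exact s.next_apply_sepIndex_ne _ _ (apply_firstDiff_ne hne) <|
    (hy _ hlt).symm.trans ((congrFun h _).trans (hy' _ hlt))

theorem color_limit_of_eventually_eq {b : Bool} {N : ℕ} (hy : ∀ i ≥ N, y i = b) :
    χ (s.limit p₀ y) = b := by
  set q := (s.run p₀ y (N + 1)).1
  have hq : χ q = b := by rw [← hy N le_rfl]; exact s.color_next _ _ _
  have hstable : ∀ k, (s.run p₀ y (N + 1 + k)).1 = q := by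
    intro k
    induction k with
    | zero => rfl
    | succ k ih =>
      rw [← add_assoc, run_succ, step, ih, hy _ (by omega)]
      exact s.next_of_color_eq _ _ _ hq
  suffices s.limit p₀ y = q by rw [this, hq]
  funext i
  have := s.limit_mem_cylinder (p₀ := p₀) (y := y) (n := N + 1 + (i + 1)) i
    (by have := s.le_run_snd (p₀ := p₀) (y := y) (n := N + 1 + (i + 1)); omega)
  rwa [hstable] at this

theorem limit_mem_closure [TopologicalSpace α] [DiscreteTopology α] (b : Bool) :
    s.limit p₀ y ∈ closure (range (s.limit p₀) ∩ χ ⁻¹' {b}) := by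
  refine mem_closure_iff_forall_cylinder_inter_nonempty.2 fun N => ?_
  let y' i := if i < N then y i else b
  exact ⟨s.limit p₀ y', limit_mem_cylinder_limit fun i hi => if_pos hi, mem_range_self _,
    color_limit_of_eventually_eq fun i hi => if_neg (not_lt.2 hi)⟩

end ColorSplitting

theorem exists_nat_bool_injection_of_subset_closure_fibers {α : Type*} [TopologicalSpace α]
    [DiscreteTopology α] {K : Set (ℕ → α)} (hK : IsClosed K) (hne : K.Nonempty)
    {χ : (ℕ → α) → Bool} (hχ : ∀ b, K ⊆ closure (K ∩ χ ⁻¹' {b})) :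
    ∃ φ : (ℕ → Bool) → ℕ → α, Continuous φ ∧ Injective φ ∧ range φ ⊆ K ∧
      ∀ b, range φ ⊆ closure (range φ ∩ χ ⁻¹' {b}) := by
  obtain ⟨s⟩ := ColorSplitting.nonempty_of_subset_closure hχ
  obtain ⟨p₀⟩ := hne.to_subtype
  exact ⟨s.limit p₀, s.continuous_limit, s.limit_injective,
    range_subset_iff.2 fun _ => s.limit_mem hK,
    fun b => range_subset_iff.2 fun _ => s.limit_mem_closure b⟩

/-- The generalized Baire grand theorem implies the weak Hurewicz separation
property. -/
theorem WHSP_of_GBT (h : GBT) : WHSP := by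
  classical
  intro A B hAB hsep
  let χ : (ℕ → ℕ) → Bool := fun x => decide (x ∈ A)
  let f : ↥(A ∪ B) → Bool := fun x => χ x
  obtain ⟨K, hKc, hKne, hKf⟩ : ∃ K : Set ↥(A ∪ B), IsCompact K ∧ K.Nonempty ∧
      ∀ x : K, ¬ContinuousAt (K.domRestrict f) x := by
    by_contra! hcont
    refine hsep (exists_isFsigma_separating_of_isFsigma_subtype hAB ?_)
    simpa [f, χ, preimage] using (h _ Bool f).2 hcont {true} (isOpen_discrete _)
  have : CompactSpace K := isCompact_iff_compactSpace.1 hKc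
  let e : K → ℕ → ℕ := fun x => (x : ↥(A ∪ B))
  have he : Continuous e := by fun_prop
  obtain ⟨φ, hφc, hφi, hφK, hφA⟩ := exists_nat_bool_injection_of_subset_closure_fibers
    (isCompact_range he).isClosed (range_nonempty_iff_nonempty.2 hKne.to_subtype)
    fun b => he.range_subset_closure_range_inter (t := χ ⁻¹' {b})
      (dense_preimage_of_forall_not_continuousAt hKf b)
  have hdense (b : Bool) : Dense ((↑) ⁻¹' (χ ⁻¹' {b}) : Set (range φ)) :=
    Subtype.dense_iff.2 (by rw [Subtype.image_preimage_coe]; exact hφA b)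
  exact ⟨range φ, ⟨(hφc.isClosedEmbedding hφi).isEmbedding.toHomeomorph.symm⟩,
    hφK.trans (range_subset_iff.2 fun x => x.1.2), by simpa [χ, preimage] using hdense true,
    by simpa [χ, preimage] using hdense false⟩
end

section
/- (Baire's grand theorem) Let X be a Polish space, Y a separable metrizable space, and f : X → Y. Then f is Baire class 1 if and only if the restriction f↾K has a point of continuity for every nonempty compact K ⊆ X. -/
open Filter Topology TopologicalSpace

/-!
If `f` is Baire class 1, so is its restriction to a compact `K`, and `K` is a Baire space. Covering
`Y` by countably many small balls, whose preimages are Fσ, the Baire category theorem shows that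
the points of oscillation `< ε` form a dense open set; their intersection over `ε` consists of
points of continuity.

Conversely, since open subsets of `Y` are countable unions of closed sets, it suffices to separate
`f ⁻¹' C` from `f ⁻¹' D` by an Fσ set when `C` and `D` are disjoint and closed. Let `W` be the union
of the basic open sets on which such a separation exists; `W` has one too. If `F = Wᶜ` is nonempty,
both preimages are dense in `F`: a neighbourhood of a point of `F` missing the part in `F` of one
of them could be added to `W`. Adjoining to a point of `F`, stage by stage, nearby points of both
preimages gives a totally bounded set in which both are dense. Its closure `K` is compact, and
every point of `K` is a limit of points mapped into `C` and of points mapped into `D`, so `f`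
restricted to `K` is nowhere continuous.
-/

open Set Metric

section Fsigma

variable {X : Type*} [TopologicalSpace X] {s t : Set X}

theorem IsClosed.isFsigma (hs : IsClosed s) : IsFsigma s :=
  ⟨fun _ => s, fun _ => hs, (iUnion_const s).symm⟩

theorem isFsigma_iUnion_of_isClosed {ι : Type*} [Countable ι] {F : ι → Set X}
    (hF : ∀ i, IsClosed (F i)) : IsFsigma (⋃ i, F i) := by
  rcases isEmpty_or_nonempty ι with hι | hι
  · rw [iUnion_of_empty]
    exact isClosed_empty.isFsigma
  · obtain ⟨e, he⟩ := exists_surjective_nat ι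
    exact ⟨F ∘ e, fun n => hF (e n), (he.iUnion_comp F).symm⟩

theorem IsFsigma.iUnion {ι : Type*} [Countable ι] {s : ι → Set X} (h : ∀ i, IsFsigma (s i)) :
    IsFsigma (⋃ i, s i) := by
  choose F hF hs using h
  simp_rw [hs, ← iUnion_prod' fun p : ι × ℕ => F p.1 p.2]
  exact isFsigma_iUnion_of_isClosed fun p => hF p.1 p.2

theorem IsFsigma.union (hs : IsFsigma s) (ht : IsFsigma t) : IsFsigma (s ∪ t) := by
  rw [union_eq_iUnion]
  exact .iUnion (Bool.forall_bool.2 ⟨ht, hs⟩)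

theorem IsFsigma.inter_isClosed (hs : IsFsigma s) (ht : IsClosed t) : IsFsigma (s ∩ t) := by
  obtain ⟨F, hF, rfl⟩ := hs
  exact ⟨fun n => F n ∩ t, fun n => (hF n).inter ht, iUnion_inter t F⟩

theorem IsFsigma.preimage {Y : Type*} [TopologicalSpace Y] {g : Y → X} (hs : IsFsigma s)
    (hg : Continuous g) : IsFsigma (g ⁻¹' s) := by
  obtain ⟨F, hF, rfl⟩ := hs
  exact ⟨fun n => g ⁻¹' F n, fun n => (hF n).preimage hg, preimage_iUnion⟩

theorem IsOpen.isFsigma [PerfectlyNormalSpace X] (hs : IsOpen s) : IsFsigma s := by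
  obtain ⟨U, hU, hsU⟩ := isGδ_iff_eq_iInter_nat.1 hs.isClosed_compl.isGδ
  refine ⟨fun n => (U n)ᶜ, fun n => (hU n).isClosed_compl, ?_⟩
  rw [← compl_iInter, ← hsU, compl_compl]

end Fsigma

theorem BaireClassOne.comp_continuous {X Y Z : Type*} [TopologicalSpace X] [TopologicalSpace Y]
    [TopologicalSpace Z] {f : X → Y} {g : Z → X} (hf : BaireClassOne f) (hg : Continuous g) :
    BaireClassOne (f ∘ g) :=
  fun V hV => (hf V hV).preimage hg

section Oscillation

open scoped ENNReal

variable {Z Y : Type*} [TopologicalSpace Z] [PseudoEMetricSpace Y] {g : Z → Y}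

theorem oscillation_lt_iff {x : Z} {ε : ℝ≥0∞} :
    oscillation g x < ε ↔ ∃ U ∈ 𝓝 x, ediam (g '' U) < ε := by
  simp only [oscillation, iInf_lt_iff, exists_prop]
  constructor
  · rintro ⟨S, hS, hSε⟩
    exact ⟨g ⁻¹' S, hS, (ediam_mono (image_preimage_subset g S)).trans_lt hSε⟩
  · rintro ⟨U, hU, hUε⟩
    exact ⟨g '' U, image_mem_map hU, hUε⟩

theorem isOpen_setOf_oscillation_lt (g : Z → Y) (ε : ℝ≥0∞) :
    IsOpen {x | oscillation g x < ε} := by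
  refine isOpen_iff_mem_nhds.2 fun x hx => ?_
  obtain ⟨U, hU, hUε⟩ := oscillation_lt_iff.1 hx
  filter_upwards [eventually_mem_nhds_iff.2 hU] with y hy
  exact oscillation_lt_iff.2 ⟨U, hy, hUε⟩

theorem BaireClassOne.dense_setOf_oscillation_lt [BaireSpace Z] [SeparableSpace Y]
    (hg : BaireClassOne g) {ε : ℝ≥0∞} (hε : 0 < ε) : Dense {x | oscillation g x < ε} := by
  obtain ⟨δ, hδ, hδε⟩ := exists_between hε
  obtain ⟨s, hsc, hsd⟩ := exists_countable_dense Y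
  have : Countable s := hsc.to_subtype
  choose F hF hgF using fun y : s => hg (eball y (δ / 2)) isOpen_eball
  have hcover : ⋃ p : s × ℕ, F p.1 p.2 = univ := by
    refine eq_univ_of_forall fun x => ?_
    obtain ⟨y, hy, hxy⟩ := EMetric.mem_closure_iff.1 (hsd (g x)) _ (ENNReal.half_pos hδ.ne')
    have hx : x ∈ g ⁻¹' eball y (δ / 2) := hxy
    rw [hgF ⟨y, hy⟩, mem_iUnion] at hx
    obtain ⟨n, hn⟩ := hx
    exact mem_iUnion.2 ⟨(⟨y, hy⟩, n), hn⟩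
  refine (dense_iUnion_interior_of_closed (fun p : s × ℕ => hF p.1 p.2) hcover).mono ?_
  rintro x hx
  obtain ⟨⟨y, n⟩, hxn⟩ := mem_iUnion.1 hx
  have himage : g '' interior (F y n) ⊆ eball y (δ / 2) := by
    rw [image_subset_iff, hgF y]
    exact interior_subset.trans (subset_iUnion _ n)
  refine oscillation_lt_iff.2 ⟨_, isOpen_interior.mem_nhds hxn, lt_of_le_of_lt ?_ hδε⟩
  calc ediam (g '' interior (F y n)) ≤ 2 * (δ / 2) := (ediam_mono himage).trans ediam_eball_le
    _ = δ := ENNReal.mul_div_cancel two_ne_zero ENNReal.ofNat_ne_top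

theorem BaireClassOne.exists_continuousAt [BaireSpace Z] [Nonempty Z] [SeparableSpace Y]
    (hg : BaireClassOne g) : ∃ x, ContinuousAt g x := by
  have hdense : Dense (⋂ n : ℕ, {x | oscillation g x < (n : ℝ≥0∞)⁻¹}) :=
    dense_iInter_of_isOpen (fun n => isOpen_setOf_oscillation_lt g _)
      (fun n => hg.dense_setOf_oscillation_lt (ENNReal.inv_pos.2 (ENNReal.natCast_ne_top n)))
  obtain ⟨x, hx⟩ := hdense.nonempty
  refine ⟨x, (Oscillation.eq_zero_iff_continuousAt g x).1 (by_contra fun h => ?_)⟩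
  obtain ⟨n, hn⟩ := ENNReal.exists_inv_nat_lt h
  exact lt_asymm (mem_iInter.1 hx n) hn

end Oscillation

theorem BaireClassOne.exists_continuousWithinAt_of_isCompact {X Y : Type*} [TopologicalSpace X]
    [T2Space X] [PseudoEMetricSpace Y] [SeparableSpace Y] {f : X → Y} (hf : BaireClassOne f)
    {K : Set X} (hK : IsCompact K) (hne : K.Nonempty) : ∃ x ∈ K, ContinuousWithinAt f K x := by
  have : CompactSpace K := isCompact_iff_compactSpace.1 hK
  have : Nonempty K := hne.to_subtype
  have hfK : BaireClassOne (K.domRestrict f) := hf.comp_continuous continuous_subtype_val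
  obtain ⟨⟨x, hx⟩, hfx⟩ := hfK.exists_continuousAt
  exact ⟨x, hx, (continuousWithinAt_iff_continuousAt_domRestrict f hx).2 hfx⟩

section CompactWitness

variable {X : Type*} [PseudoMetricSpace X]

theorem totallyBounded_iUnion_of_forall_exists_dist_le {L : ℕ → Set X}
    (hLf : ∀ n, (L n).Finite) (hLm : Monotone L)
    (hL : ∀ n, ∀ x ∈ L (n + 1), ∃ y ∈ L n, dist x y ≤ 2⁻¹ ^ (n + 1)) :
    TotallyBounded (⋃ n, L n) := by
  have hclose : ∀ n k, ∀ x ∈ L (n + k), ∃ y ∈ L n, dist x y ≤ 2⁻¹ ^ n - 2⁻¹ ^ (n + k) := by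
    intro n k
    induction k with
    | zero => exact fun x hx => ⟨x, hx, by simp⟩
    | succ k ih =>
      intro x hx
      obtain ⟨z, hz, hxz⟩ := hL (n + k) x hx
      obtain ⟨y, hy, hzy⟩ := ih z hz
      refine ⟨y, hy, ?_⟩
      calc dist x y ≤ dist x z + dist z y := dist_triangle x z y
        _ ≤ 2⁻¹ ^ (n + k + 1) + (2⁻¹ ^ n - 2⁻¹ ^ (n + k)) := add_le_add hxz hzy
        _ = 2⁻¹ ^ n - 2⁻¹ ^ (n + (k + 1)) := by ring
  refine Metric.totallyBounded_iff.2 fun ε hε => ?_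
  obtain ⟨n, hn⟩ := exists_pow_lt_of_lt_one hε (by norm_num : (2⁻¹ : ℝ) < 1)
  refine ⟨L n, hLf n, iUnion_subset fun m x hx => ?_⟩
  obtain ⟨y, hy, hxy⟩ := hclose n m x (hLm (Nat.le_add_left m n) hx)
  exact mem_biUnion hy (mem_ball.2 ((hxy.trans_lt (sub_lt_self _ (by positivity))).trans hn))

theorem exists_totallyBounded_subset_closure_inter {ι : Type*} [Finite ι] {A : ι → Set X}
    {G : Set X} (hG : G.Nonempty) (hGA : ∀ i, G ⊆ closure (G ∩ A i)) :
    ∃ Q, TotallyBounded Q ∧ Q.Nonempty ∧ ∀ i, Q ⊆ closure (Q ∩ A i) := by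
  -- quantified over all of `X`, so that `choose` yields a total function
  have hstep : ∀ (x : X) (i : ι) (n : ℕ),
      ∃ y, x ∈ G → y ∈ G ∩ A i ∧ dist x y < 2⁻¹ ^ (n + 1) := by
    intro x i n
    by_cases hx : x ∈ G
    · obtain ⟨y, hy, hxy⟩ :=
        Metric.mem_closure_iff.1 (hGA i hx) ((2⁻¹ : ℝ) ^ (n + 1)) (by positivity)
      exact ⟨y, fun _ => ⟨hy, hxy⟩⟩
    · exact ⟨x, fun h => (hx h).elim⟩
  choose p hp using hstep
  obtain ⟨x₀, hx₀⟩ := hG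
  let L : ℕ → Set X := fun n => Nat.rec {x₀} (fun n Ln => Ln ∪ ⋃ i, (p · i n) '' Ln) n
  have hLsucc : ∀ n, L (n + 1) = L n ∪ ⋃ i, (p · i n) '' L n := fun n => rfl
  have hLm : Monotone L := monotone_nat_of_le_succ fun n => (hLsucc n).symm ▸ subset_union_left
  have hLG : ∀ n, L n ⊆ G := by
    intro n
    induction n with
    | zero => exact singleton_subset_iff.2 hx₀
    | succ n ih =>
      rw [hLsucc, union_subset_iff, iUnion_subset_iff]
      exact ⟨ih, fun i => image_subset_iff.2 fun x hx => (hp x i n (ih hx)).1.1⟩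
  have hLf : ∀ n, (L n).Finite := by
    intro n
    induction n with
    | zero => exact finite_singleton x₀
    | succ n ih => exact (hLsucc n).symm ▸ ih.union (finite_iUnion fun i => ih.image _)
  have hstep_mem : ∀ n, ∀ x ∈ L n, ∀ i, p x i n ∈ L (n + 1) := fun n x hx i =>
    (hLsucc n).symm ▸ Or.inr (mem_iUnion.2 ⟨i, mem_image_of_mem _ hx⟩)
  refine ⟨⋃ n, L n, ?_, ⟨x₀, mem_iUnion.2 ⟨0, rfl⟩⟩, ?_⟩
  · refine totallyBounded_iUnion_of_forall_exists_dist_le hLf hLm fun n x hx => ?_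
    rw [hLsucc] at hx
    rcases hx with hx | hx
    · exact ⟨x, hx, by simp⟩
    · obtain ⟨i, y, hy, rfl⟩ := by simpa only [mem_iUnion, mem_image] using hx
      exact ⟨y, hy, by rw [dist_comm]; exact (hp y i n (hLG n hy)).2.le⟩
  · intro i x hx
    obtain ⟨n, hxn⟩ := mem_iUnion.1 hx
    refine Metric.mem_closure_iff.2 fun ε hε => ?_
    obtain ⟨m, hm⟩ := exists_pow_lt_of_lt_one hε (by norm_num : (2⁻¹ : ℝ) < 1)
    have hxm : x ∈ L (n + m) := hLm (Nat.le_add_right n m) hxn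
    have hpA := (hp x i (n + m) (hLG _ hxm)).1.2
    refine ⟨p x i (n + m), ⟨mem_iUnion.2 ⟨n + m + 1, hstep_mem _ x hxm i⟩, hpA⟩, ?_⟩
    calc dist x (p x i (n + m)) < 2⁻¹ ^ (n + m + 1) := (hp x i (n + m) (hLG _ hxm)).2
      _ ≤ 2⁻¹ ^ m := pow_le_pow_of_le_one (by norm_num) (by norm_num) (by omega)
      _ < ε := hm

theorem exists_isCompact_subset_closure_inter [CompleteSpace X] {ι : Type*} [Finite ι]
    {A : ι → Set X} {G : Set X} (hG : G.Nonempty) (hGA : ∀ i, G ⊆ closure (G ∩ A i)) :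
    ∃ K, IsCompact K ∧ K.Nonempty ∧ ∀ i, K ⊆ closure (K ∩ A i) := by
  obtain ⟨Q, hQb, hQne, hQA⟩ := exists_totallyBounded_subset_closure_inter hG hGA
  refine ⟨closure Q, hQb.closure.isCompact_of_isClosed isClosed_closure, hQne.closure,
    fun i => ?_⟩
  exact closure_minimal ((hQA i).trans (closure_mono (inter_subset_inter_left _ subset_closure)))
    isClosed_closure

end CompactWitness

section Separation

variable {X : Type*} [TopologicalSpace X] {A B U W : Set X}

def FsigmaSeparatedOn (A B U : Set X) : Prop :=
  ∃ S, IsFsigma S ∧ A ∩ U ⊆ S ∧ Disjoint S B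

theorem FsigmaSeparatedOn.mono (h : FsigmaSeparatedOn A B W) (hUW : U ⊆ W) :
    FsigmaSeparatedOn A B U :=
  let ⟨S, hS, hAS, hSB⟩ := h
  ⟨S, hS, (inter_subset_inter_right A hUW).trans hAS, hSB⟩

theorem FsigmaSeparatedOn.iUnion {ι : Type*} [Countable ι] {U : ι → Set X}
    (h : ∀ i, FsigmaSeparatedOn A B (U i)) : FsigmaSeparatedOn A B (⋃ i, U i) := by
  choose S hS hAS hSB using h
  exact ⟨⋃ i, S i, .iUnion hS, by rw [inter_iUnion]; exact iUnion_mono hAS,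
    disjoint_iUnion_left.2 hSB⟩

theorem FsigmaSeparatedOn.of_disjoint_closure_left (hW : FsigmaSeparatedOn A B W)
    (hU : Disjoint U (closure (Wᶜ ∩ A))) : FsigmaSeparatedOn A B U := by
  obtain ⟨S, hS, hAS, hSB⟩ := hW
  refine ⟨S, hS, fun x ⟨hxA, hxU⟩ => hAS ⟨hxA, ?_⟩, hSB⟩
  by_contra hxW
  exact disjoint_left.1 hU hxU (subset_closure ⟨hxW, hxA⟩)

theorem FsigmaSeparatedOn.of_disjoint_closure_right [PerfectlyNormalSpace X]
    (hW : FsigmaSeparatedOn A B W) (hWo : IsOpen W) (hUo : IsOpen U)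
    (hU : Disjoint U (closure (Wᶜ ∩ B))) : FsigmaSeparatedOn A B U := by
  obtain ⟨S, hS, hAS, hSB⟩ := hW
  refine ⟨S ∪ (U ∩ Wᶜ), hS.union (hUo.isFsigma.inter_isClosed hWo.isClosed_compl), ?_, ?_⟩
  · rintro x ⟨hxA, hxU⟩
    by_cases hxW : x ∈ W
    · exact Or.inl (hAS ⟨hxA, hxW⟩)
    · exact Or.inr ⟨hxU, hxW⟩
  · refine disjoint_union_left.2 ⟨hSB, disjoint_left.2 fun x ⟨hxU, hxW⟩ hxB => ?_⟩
    exact disjoint_left.1 hU hxU (subset_closure ⟨hxW, hxB⟩)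

theorem exists_isFsigma_separation [SecondCountableTopology X] [PerfectlyNormalSpace X]
    (h : ∀ F : Set X, IsClosed F → F ⊆ closure (F ∩ A) → F ⊆ closure (F ∩ B) → F = ∅) :
    ∃ S, IsFsigma S ∧ A ⊆ S ∧ Disjoint S B := by
  obtain ⟨𝓑, h𝓑c, -, h𝓑⟩ := exists_countable_basis X
  let 𝓖 := {U ∈ 𝓑 | FsigmaSeparatedOn A B U}
  have : Countable 𝓖 := (h𝓑c.mono (sep_subset _ _)).to_subtype
  let W := ⋃ U : 𝓖, (U : Set X)
  have hW : FsigmaSeparatedOn A B W := .iUnion fun U => U.2.2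
  have hWo : IsOpen W := isOpen_iUnion fun U => h𝓑.isOpen U.2.1
  have hmax : ∀ x ∉ W, ∀ U, IsOpen U → x ∈ U → ¬FsigmaSeparatedOn A B U := by
    intro x hx U hUo hxU hU
    obtain ⟨V, hV, hxV, hVU⟩ := h𝓑.exists_subset_of_mem_open hxU hUo
    exact hx (mem_iUnion.2 ⟨⟨V, hV, hU.mono hVU⟩, hxV⟩)
  have hWc : Wᶜ = ∅ := by
    refine h Wᶜ hWo.isClosed_compl (fun x hx => by_contra fun hxA => ?_)
      (fun x hx => by_contra fun hxB => ?_)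
    · exact hmax x hx _ isClosed_closure.isOpen_compl hxA
        (hW.of_disjoint_closure_left disjoint_compl_left)
    · exact hmax x hx _ isClosed_closure.isOpen_compl hxB
        (hW.of_disjoint_closure_right hWo isClosed_closure.isOpen_compl disjoint_compl_left)
  obtain ⟨S, hS, hAS, hSB⟩ := hW
  exact ⟨S, hS, by simpa [compl_empty_iff.1 hWc] using hAS, hSB⟩

end Separation

section Converse

variable {X Y : Type*} [TopologicalSpace X] [PolishSpace X] [TopologicalSpace Y] {f : X → Y}

theorem exists_isFsigma_separation_preimage
    (h : ∀ K : Set X, IsCompact K → K.Nonempty → ∃ x ∈ K, ContinuousWithinAt f K x)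
    {C D : Set Y} (hC : IsClosed C) (hD : IsClosed D) (hCD : Disjoint C D) :
    ∃ S, IsFsigma S ∧ f ⁻¹' C ⊆ S ∧ Disjoint S (f ⁻¹' D) := by
  let := upgradeIsCompletelyMetrizable X
  refine exists_isFsigma_separation fun F _ hFC hFD => not_nonempty_iff_eq_empty.1 fun hF => ?_
  obtain ⟨K, hK, hKne, hKCD⟩ :=
    exists_isCompact_subset_closure_inter (A := ![f ⁻¹' C, f ⁻¹' D]) hF
      (Fin.forall_fin_two.2 ⟨hFC, hFD⟩)
  obtain ⟨x, hxK, hfx⟩ := h K hK hKne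
  have hmem : ∀ {E : Set Y}, IsClosed E → x ∈ closure (K ∩ f ⁻¹' E) → f x ∈ E := fun hE hx =>
    hE.closure_subset ((hfx.mono inter_subset_left).mem_closure hx fun _ hy => hy.2)
  exact disjoint_left.1 hCD (hmem hC (hKCD 0 hxK)) (hmem hD (hKCD 1 hxK))

theorem baireClassOne_of_forall_isCompact_exists_continuousWithinAt [PerfectlyNormalSpace Y]
    (h : ∀ K : Set X, IsCompact K → K.Nonempty → ∃ x ∈ K, ContinuousWithinAt f K x) :
    BaireClassOne f := by
  intro V hV
  obtain ⟨C, hC, rfl⟩ := hV.isFsigma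
  have hCV : ∀ n, Disjoint (C n) (⋃ n, C n)ᶜ := fun n =>
    disjoint_compl_right_iff_subset.2 (subset_iUnion C n)
  choose S hS hCS hSV using fun n =>
    exists_isFsigma_separation_preimage h (hC n) hV.isClosed_compl (hCV n)
  convert IsFsigma.iUnion hS
  refine (preimage_iUnion.trans_subset (iUnion_mono hCS)).antisymm
    (iUnion_subset fun n x hx => by_contra fun hxV => ?_)
  exact disjoint_left.1 (hSV n) hx hxV

end Converse

/-- Baire's grand theorem: for `X` a Polish space, `Y` a separable metrizable space
and `f : X → Y`, `f` is Baire class 1 iff the restriction `f↾K` has a point of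
continuity for every nonempty compact `K ⊆ X`. -/
theorem baire_grand_theorem {X Y : Type*} [TopologicalSpace X] [PolishSpace X]
    [TopologicalSpace Y] [SeparableSpace Y] [MetrizableSpace Y]
    (f : X → Y) :
    BaireClassOne f ↔
      ∀ K : Set X, IsCompact K → K.Nonempty →
        ∃ x : K, ContinuousAt (K.restrict f) x := by
  have hrestrict : ∀ K : Set X, (∃ x : K, ContinuousAt (K.restrict f) x) ↔
      ∃ x ∈ K, ContinuousWithinAt f K x := fun K =>
    ⟨fun ⟨⟨x, hx⟩, hfx⟩ => ⟨x, hx, (continuousWithinAt_iff_continuousAt_domRestrict f hx).2 hfx⟩,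
      fun ⟨x, hx, hfx⟩ => ⟨⟨x, hx⟩, (continuousWithinAt_iff_continuousAt_domRestrict f hx).1 hfx⟩⟩
  simp only [hrestrict]
  let := metrizableSpaceMetric Y
  exact ⟨fun hf K hK hne => hf.exists_continuousWithinAt_of_isCompact hK hne,
    baireClassOne_of_forall_isCompact_exists_continuousWithinAt⟩
end

section
/- Let X and Y be separable metrizable spaces and let f : X → Y. If Player I has a winning strategy in the game G(f), then there exists a compact subset K of X such that Player I has a winning strategy in the game G(f↾K), where f↾K : K → Y is the restriction of f to K with the subspace topology. -/
open Filter Topology TopologicalSpace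

/-- A sequence of (open) sets is convergent to `x` if it is ⊆-decreasing, and is a
local basis at `x`: every term contains `x` and every neighborhood of `x`
contains some term. -/
def SeqConvergesTo {X : Type*} [TopologicalSpace X] (U : ℕ → Set X) (x : X) : Prop :=
  (∀ n, U (n + 1) ⊆ U n) ∧ (∀ n, x ∈ U n) ∧
    ∀ V : Set X, IsOpen V → x ∈ V → ∃ n, U n ⊆ V

/-- A valid partial play of Player I in `G(f)`: a ⊆-decreasing finite sequence of
nonempty open sets. -/
def ValidIPlay {X : Type*} [TopologicalSpace X] (l : List (Set X)) : Prop :=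
  (∀ U ∈ l, IsOpen U ∧ U.Nonempty) ∧ l.Chain' (fun a b => b ⊆ a)

/-- `σ` (mapping partial plays of Player I, i.e. nonempty ⊆-decreasing finite sequences of
nonempty open subsets of `X`, to elements of `ran f`) is a winning strategy for
Player II in the game `G(f)`: for every run `(U n)` of Player I, letting
`y n = σ [U 0, …, U n]`, if `(U n)` converges to some `x` then `(y n)` tends to `f x`. -/
def IsWinningII {X Y : Type*} [TopologicalSpace X] [TopologicalSpace Y]
    (f : X → Y) (σ : List (Set X) → Y) : Prop :=
  (∀ l : List (Set X), l ≠ [] → ValidIPlay l → σ l ∈ Set.range f) ∧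
  ∀ U : ℕ → Set X, (∀ n, IsOpen (U n)) → (∀ n, (U n).Nonempty) →
    (∀ n, U (n + 1) ⊆ U n) →
    ∀ x : X, SeqConvergesTo U x →
      Tendsto (fun n => σ ((List.range (n + 1)).map U)) atTop (𝓝 (f x))

/-- `τ` (mapping finite sequences of elements of `ran f`, including the empty one,
to nonempty open subsets of `X`, obeying the ⊆-decreasing rule along any run) is a
winning strategy for Player I in the game `G(f)`: for every run `(y n)` of Player II
with values in `ran f`, letting `U n = τ [y 0, …, y (n-1)]`, the sequence `(U n)`
converges to some `x` while `(y n)` does not tend to `f x`. -/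
def IsWinningI {X Y : Type*} [TopologicalSpace X] [TopologicalSpace Y]
    (f : X → Y) (τ : List Y → Set X) : Prop :=
  (∀ l : List Y, (∀ y ∈ l, y ∈ Set.range f) → IsOpen (τ l) ∧ (τ l).Nonempty) ∧
  (∀ (l : List Y) (y : Y), (∀ z ∈ l, z ∈ Set.range f) → y ∈ Set.range f →
      τ (l ++ [y]) ⊆ τ l) ∧
  ∀ y : ℕ → Y, (∀ n, y n ∈ Set.range f) →
    ∃ x : X, SeqConvergesTo (fun n => τ ((List.range n).map y)) x ∧
      ¬ Tendsto y atTop (𝓝 (f x))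

/-!
Write `limitPt p` for the point to which Player I's play converges when Player II answers
`f (p 0), f (p 1), …`. Every run is `0`-guided, and a run `p` is `(k+1)`-guided from `n` on
if each move `p i`, `i ≥ n`, is itself the limit point of a continuation of `p ↾ i` that is
`k`-guided from `i` on. If at every level the limit points of guided continuations could be
confined to sets of arbitrarily small `f`-diameter, a diagonal run would be guided at every
level beyond some stage and then `f (p i) → f (limitPt p)`, contradicting that the strategy
wins. So there are a position and a `δ > 0` such that every guided continuation of it splits
into two guided ones whose limit points have `f`-values more than `δ` apart. Splitting along a
tree indexed by `ℕ → Bool × Bool` gives a continuous map whose image `K` is compact. On `K`,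
Player I keeps the current branch while Player II stays `δ/4` away from the `f`-value of its
limit point, and otherwise moves to a branch whose limit point has `f`-value `δ/2` away from
Player II's move; so either Player II eventually stays `δ/4` away from the `f`-value of the
final point, or his moves jump by `δ/4` infinitely often.
-/
open Set

section Diagonal

variable {X : Type*}

theorem eqOn_of_le_of_forall_eqOn_succ {g : ℕ → ℕ → X} {m : ℕ → ℕ} (hm : Monotone m)
    (hg : ∀ j, EqOn (g (j + 1)) (g j) (Iio (m j))) {j j' : ℕ} (h : j ≤ j') :
    EqOn (g j') (g j) (Iio (m j)) := by
  induction j', h using Nat.le_induction with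
  | base => exact eqOn_refl _ _
  | succ j' hj ih => exact ((hg j').mono (Iio_subset_Iio (hm hj))).trans ih

theorem eqOn_diag_of_forall_eqOn_succ {g : ℕ → ℕ → X} {m : ℕ → ℕ} (hm : StrictMono m)
    (hg : ∀ j, EqOn (g (j + 1)) (g j) (Iio (m j))) (j : ℕ) :
    EqOn (fun i => g (i + 1) i) (g j) (Iio (m j)) := by
  intro i hi
  rcases le_total (i + 1) j with h | h
  · exact (eqOn_of_le_of_forall_eqOn_succ hm.monotone hg h
      ((Nat.lt_succ_self i).trans_le (hm.id_le _))).symm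
  · exact eqOn_of_le_of_forall_eqOn_succ hm.monotone hg h hi

theorem exists_eqOn_forall_mem (S : ℕ → (ℕ → X) → Set X)
    (hS : ∀ i q q', EqOn q q' (Iio i) → S i q = S i q') (hne : ∀ i q, (S i q).Nonempty)
    (p : ℕ → X) (n : ℕ) : ∃ q, EqOn q p (Iio n) ∧ ∀ i ∈ Ici n, q i ∈ S i q := by
  choose pick hpick using hne
  let g : ℕ → ℕ → X := fun j =>
    Nat.rec p (fun j gj => Function.update gj (n + j) (pick (n + j) gj)) j
  have hg : ∀ j, EqOn (g (j + 1)) (g j) (Iio (n + j)) := fun j i hi =>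
    Function.update_of_ne (ne_of_lt hi) _ _
  have hm : StrictMono (n + ·) := fun _ _ h => Nat.add_lt_add_left h n
  refine ⟨fun i => g (i + 1) i, eqOn_diag_of_forall_eqOn_succ hm hg 0, fun i hi => ?_⟩
  obtain ⟨j, rfl⟩ := Nat.exists_eq_add_of_le hi
  rw [eqOn_diag_of_forall_eqOn_succ hm hg (j + 1) (by simp : n + j < n + (j + 1)),
    hS _ _ _ (eqOn_diag_of_forall_eqOn_succ hm hg j)]
  show Function.update (g j) (n + j) _ (n + j) ∈ _
  rw [Function.update_self]
  exact hpick _ _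

end Diagonal

theorem SeqConvergesTo.comp_add {X : Type*} [TopologicalSpace X] {U : ℕ → Set X} {x : X}
    (h : SeqConvergesTo U x) (c : ℕ) : SeqConvergesTo (fun j => U (c + j)) x :=
  ⟨fun j => h.1 (c + j), fun j => h.2.1 (c + j), fun V hV hx =>
    let ⟨n, hn⟩ := h.2.2 V hV hx
    ⟨n, (antitone_nat_of_succ_le h.1 (Nat.le_add_left n c)).trans hn⟩⟩

theorem SeqConvergesTo.preimage {X X' : Type*} [TopologicalSpace X] [TopologicalSpace X']
    {g : X' → X} (hg : Topology.IsInducing g) {U : ℕ → Set X} {x : X'}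
    (h : SeqConvergesTo U (g x)) : SeqConvergesTo (fun n => g ⁻¹' U n) x := by
  refine ⟨fun n => preimage_mono (h.1 n), h.2.1, fun V hV hx => ?_⟩
  obtain ⟨W, hW, rfl⟩ := hg.isOpen_iff.1 hV
  obtain ⟨n, hn⟩ := h.2.2 W hW hx
  exact ⟨n, preimage_mono hn⟩

theorem exists_isWinningI_of_seq {X Y : Type*} [TopologicalSpace X] [TopologicalSpace Y]
    [Nonempty Y] {f : X → Y} (T : (ℕ → Y) → ℕ → Set X)
    (hT : ∀ y y' j, EqOn y y' (Iio j) → T y j = T y' j)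
    (hopen : ∀ y j, IsOpen (T y j)) (hne : ∀ y j, (T y j).Nonempty)
    (hanti : ∀ y j, T y (j + 1) ⊆ T y j)
    (hwin : ∀ y : ℕ → Y, (∀ n, y n ∈ range f) →
      ∃ x, SeqConvergesTo (T y) x ∧ ¬ Tendsto y atTop (𝓝 (f x))) :
    ∃ τ : List Y → Set X, IsWinningI f τ := by
  let seq : List Y → ℕ → Y := fun l i => l.getD i (Classical.arbitrary Y)
  have hprefix : ∀ y n, T (seq ((List.range n).map y)) n = T y n := fun y n =>
    hT _ _ _ fun i hi => by simp [seq, List.getD_eq_getElem?_getD, (mem_Iio.1 hi)]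
  refine ⟨fun l => T (seq l) l.length, fun l _ => ⟨hopen _ _, hne _ _⟩, fun l v _ _ => ?_,
    fun y hy => ?_⟩
  · show T (seq (l ++ [v])) (l ++ [v]).length ⊆ T (seq l) l.length
    rw [List.length_append, List.length_singleton]
    exact (hanti _ _).trans
      (hT _ _ _ fun i hi => List.getD_append _ _ _ _ (mem_Iio.1 hi)).subset
  · simpa only [List.length_map, List.length_range, hprefix] using hwin y hy

section Reach

variable {X Y : Type*} {f : X → Y} {τ : List Y → Set X}

def movesI (τ : List Y → Set X) (f : X → Y) (p : ℕ → X) (n : ℕ) : Set X :=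
  τ ((List.range n).map (f ∘ p))

theorem movesI_congr {p p' : ℕ → X} {n : ℕ} (h : EqOn p p' (Iio n)) :
    movesI τ f p n = movesI τ f p' n := by
  unfold movesI
  congr 1
  exact List.map_congr_left fun i hi => congrArg f (h (List.mem_range.1 hi))

variable [TopologicalSpace X] [TopologicalSpace Y]

namespace IsWinningI

theorem nonempty (hτ : IsWinningI f τ) : Nonempty X :=
  ⟨(hτ.1 [] (by simp)).2.some⟩

theorem isOpen_movesI (hτ : IsWinningI f τ) (p : ℕ → X) (n : ℕ) : IsOpen (movesI τ f p n) :=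
  (hτ.1 _ (by simp)).1

theorem movesI_succ_subset (hτ : IsWinningI f τ) (p : ℕ → X) (n : ℕ) :
    movesI τ f p (n + 1) ⊆ movesI τ f p n := by
  unfold movesI
  rw [List.range_succ, List.map_append, List.map_singleton]
  exact hτ.2.1 _ _ (by simp) (mem_range_self _)

variable (hτ : IsWinningI f τ)

noncomputable def limitPt (p : ℕ → X) : X :=
  (hτ.2.2 (f ∘ p) fun _ => mem_range_self _).choose

theorem limitPt_spec (p : ℕ → X) :
    SeqConvergesTo (movesI τ f p) (hτ.limitPt p) ∧
      ¬ Tendsto (f ∘ p) atTop (𝓝 (f (hτ.limitPt p))) :=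
  (hτ.2.2 (f ∘ p) fun _ => mem_range_self _).choose_spec

theorem limitPt_mem_movesI (p : ℕ → X) (n : ℕ) : hτ.limitPt p ∈ movesI τ f p n :=
  (hτ.limitPt_spec p).1.2.1 n

def reach : ℕ → (ℕ → X) → ℕ → Set X
  | 0, _, _ => univ
  | k + 1, p, n => hτ.limitPt '' {q | EqOn q p (Iio n) ∧ ∀ i ∈ Ici n, q i ∈ reach k q i}

def Guided (k : ℕ) (q : ℕ → X) (s : Set ℕ) : Prop :=
  ∀ i ∈ s, q i ∈ hτ.reach k q i

variable {hτ}

theorem mem_reach_succ {k : ℕ} {p : ℕ → X} {n : ℕ} {x : X} :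
    x ∈ hτ.reach (k + 1) p n ↔
      ∃ q, (EqOn q p (Iio n) ∧ hτ.Guided k q (Ici n)) ∧ hτ.limitPt q = x :=
  Iff.rfl

theorem reach_congr (k : ℕ) {p p' : ℕ → X} {n : ℕ} (h : EqOn p p' (Iio n)) :
    hτ.reach k p n = hτ.reach k p' n := by
  cases k with
  | zero => rfl
  | succ k =>
    ext x
    simp only [mem_reach_succ]
    exact exists_congr fun q =>
      and_congr_left' (and_congr_left' ⟨fun hq => hq.trans h, fun hq => hq.trans h.symm⟩)

theorem reach_succ_subset (k : ℕ) (p : ℕ → X) (n : ℕ) :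
    hτ.reach (k + 1) p n ⊆ hτ.reach k p n := by
  induction k generalizing p n with
  | zero => exact subset_univ _
  | succ k ih =>
    rintro _ ⟨q, ⟨hq, hg⟩, rfl⟩
    exact ⟨q, ⟨hq, fun i hi => ih q i (hg i hi)⟩, rfl⟩

theorem reach_anti {k l : ℕ} (h : k ≤ l) (p : ℕ → X) (n : ℕ) :
    hτ.reach l p n ⊆ hτ.reach k p n :=
  antitone_nat_of_succ_le (f := fun k => hτ.reach k p n) (fun k => reach_succ_subset k p n) h

namespace Guided

variable {k : ℕ} {q : ℕ → X} {s t : Set ℕ}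

theorem mono (h : hτ.Guided k q t) (hst : s ⊆ t) : hτ.Guided k q s :=
  fun i hi => h i (hst hi)

theorem of_le {l : ℕ} (h : hτ.Guided l q s) (hkl : k ≤ l) : hτ.Guided k q s :=
  fun i hi => reach_anti hkl q i (h i hi)

theorem union (hs : hτ.Guided k q s) (ht : hτ.Guided k q t) : hτ.Guided k q (s ∪ t) :=
  fun i hi => hi.elim (hs i) (ht i)

theorem congr {q' : ℕ → X} {n m : ℕ} (h : hτ.Guided k q (Ico n m)) (hq : EqOn q q' (Iio m)) :
    hτ.Guided k q' (Ico n m) := fun i hi => by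
  rw [← hq hi.2, ← reach_congr k (hq.mono (Iio_subset_Iio hi.2.le))]
  exact h i hi

end Guided

theorem limitPt_mem_reach_succ {k : ℕ} {q : ℕ → X} {n : ℕ} (h : hτ.Guided k q (Ici n)) :
    hτ.limitPt q ∈ hτ.reach (k + 1) q n :=
  ⟨q, ⟨eqOn_refl _ _, h⟩, rfl⟩

theorem reach_succ_subset_of_guided {k : ℕ} {q : ℕ → X} {n m : ℕ} (hnm : n ≤ m)
    (h : hτ.Guided k q (Ico n m)) : hτ.reach (k + 1) q m ⊆ hτ.reach (k + 1) q n := by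
  rintro _ ⟨r, ⟨hr, hg⟩, rfl⟩
  refine ⟨r, ⟨hr.mono (Iio_subset_Iio hnm), ?_⟩, rfl⟩
  rw [← Ico_union_Ici_eq_Ici hnm]
  exact (h.congr hr.symm).union hg

theorem mem_reach_succ_of_guided {k : ℕ} {q : ℕ → X} {m i : ℕ}
    (h : hτ.Guided (k + 1) q (Ici m)) (hi : m ≤ i) : q i ∈ hτ.reach (k + 1) q m :=
  reach_succ_subset_of_guided hi ((h.mono Ico_subset_Ici_self).of_le k.le_succ) (h i hi)

theorem guided_diag {g : ℕ → ℕ → X} {m : ℕ → ℕ} (hm : StrictMono m)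
    (hg : ∀ j, EqOn (g (j + 1)) (g j) (Iio (m j)))
    (hguid : ∀ j, hτ.Guided j (g (j + 1)) (Ico (m j) (m (j + 1)))) (k : ℕ) :
    hτ.Guided k (fun i => g (i + 1) i) (Ici (m k)) := by
  have hstage : ∀ j, k ≤ j → hτ.Guided k (fun i => g (i + 1) i) (Ico (m k) (m j)) := by
    intro j hj
    induction j, hj using Nat.le_induction with
    | base => simp [Guided]
    | succ j hkj ih =>
      rw [← Ico_union_Ico_eq_Ico (hm.monotone hkj) (hm.monotone j.le_succ)]
      exact ih.union
        (((hguid j).congr (eqOn_diag_of_forall_eqOn_succ hm hg (j + 1)).symm).of_le hkj)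
  intro i hi
  exact hstage (i + 1) (((hm.id_le k).trans hi).trans i.le_succ) i
    ⟨hi, (Nat.lt_succ_self i).trans_le (hm.id_le _)⟩

variable (hτ)

theorem reach_nonempty : ∀ k p n, (hτ.reach k p n).Nonempty
  | 0, _, _ => haveI := hτ.nonempty; univ_nonempty
  | k + 1, p, n =>
    let ⟨q, hq, hg⟩ := exists_eqOn_forall_mem (fun i q => hτ.reach k q i)
      (fun _ _ _ h => reach_congr k h) (fun i q => reach_nonempty k q i) p n
    ⟨_, q, ⟨hq, hg⟩, rfl⟩

theorem exists_guided (k : ℕ) (p : ℕ → X) (n : ℕ) :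
    ∃ q, EqOn q p (Iio n) ∧ hτ.Guided k q (Ici n) :=
  exists_eqOn_forall_mem (fun i q => hτ.reach k q i) (fun _ _ _ h => reach_congr k h)
    (fun i q => hτ.reach_nonempty k q i) p n

theorem continuous_limitPt_comp {A : Type*} [TopologicalSpace A] [DiscreteTopology A]
    {R : (ℕ → A) → ℕ → X} (hR : ∀ α α' n, EqOn α α' (Iio n) → EqOn (R α) (R α') (Iio n)) :
    Continuous fun α => hτ.limitPt (R α) := by
  refine continuous_def.2 fun V hV => isOpen_iff_mem_nhds.2 fun α hα => ?_
  obtain ⟨n, hn⟩ := (hτ.limitPt_spec (R α)).1.2.2 V hV hα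
  refine Filter.mem_of_superset ((PiNat.isOpen_cylinder (fun _ => A) α n).mem_nhds
    (PiNat.self_mem_cylinder α n)) fun α' hα' => hn ?_
  rw [← movesI_congr (hR α' α n fun i hi => hα' i hi)]
  exact hτ.limitPt_mem_movesI _ n

end IsWinningI

end Reach

section Split

variable {X Y : Type*} [TopologicalSpace X] [PseudoMetricSpace Y] {f : X → Y}
  {τ : List Y → Set X}

namespace IsWinningI

structure SplitData (hτ : IsWinningI f τ) where
  level : ℕ
  base : ℕ → X
  len : ℕ
  gap : ℝ
  gap_pos : 0 < gap
  split : ∀ q, EqOn q base (Iio len) → hτ.Guided level q (Ici len) → ∀ m, len < m →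
    ∃ x₁ ∈ hτ.reach (level + 1) q m, ∃ x₂ ∈ hτ.reach (level + 1) q m,
      gap < dist (f x₁) (f x₂)

variable (hτ : IsWinningI f τ)

theorem nonempty_splitData : Nonempty (SplitData hτ) := by
  by_contra hnone
  have hsmall : ∀ k (p : ℕ → X) n, ∃ q m, (EqOn q p (Iio n) ∧ hτ.Guided k q (Ici n)) ∧
      n < m ∧ ∀ x₁ ∈ hτ.reach (k + 1) q m, ∀ x₂ ∈ hτ.reach (k + 1) q m,
        dist (f x₁) (f x₂) ≤ 1 / (k + 1) := by
    intro k p n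
    by_contra! h
    exact hnone ⟨⟨k, p, n, 1 / (k + 1), Nat.one_div_pos_of_nat,
      fun q hq hg m hm => h q m ⟨hq, hg⟩ hm⟩⟩
  choose Q M hQ hM hdiam using hsmall
  have := hτ.nonempty
  let c : ℕ → (ℕ → X) × ℕ := fun k =>
    Nat.rec (fun _ => Classical.arbitrary X, 0) (fun k c => (Q k c.1 c.2, M k c.1 c.2)) k
  have hm : StrictMono fun k => (c k).2 := strictMono_nat_of_lt_succ fun k => hM k _ _
  have hg : ∀ k, EqOn (c (k + 1)).1 (c k).1 (Iio (c k).2) := fun k => (hQ k _ _).1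
  let β : ℕ → X := fun i => (c (i + 1)).1 i
  have hβ : ∀ k, hτ.Guided k β (Ici (c k).2) :=
    guided_diag (g := fun j => (c j).1) hm hg fun j => (hQ j _ _).2.mono Ico_subset_Ici_self
  have hclose : ∀ k, ∀ i ≥ (c (k + 1)).2,
      dist (f (β i)) (f (hτ.limitPt β)) ≤ 1 / (k + 1) := by
    intro k i hi
    have hreach := reach_congr (hτ := hτ) (k + 1)
      (eqOn_diag_of_forall_eqOn_succ (g := fun j => (c j).1) hm hg (k + 1))
    exact hdiam k (c k).1 (c k).2 _ (hreach ▸ mem_reach_succ_of_guided (hβ (k + 1)) hi) _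
      (hreach ▸ limitPt_mem_reach_succ ((hβ (k + 1)).of_le k.le_succ))
  refine (hτ.limitPt_spec β).2 (Metric.tendsto_atTop.2 fun ε hε => ?_)
  obtain ⟨k, hk⟩ := exists_nat_one_div_lt hε
  exact ⟨(c (k + 1)).2, fun i hi => (hclose k i hi).trans_lt hk⟩

end IsWinningI

end Split

theorem not_tendsto_of_escape {Y : Type*} [PseudoMetricSpace Y] {y t : ℕ → Y} {z : Y} {δ : ℝ}
    (hδ : 0 < δ) (hstay : ∀ j, δ / 4 ≤ dist (y j) (t j) → t (j + 1) = t j)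
    (hjump : ∀ j, dist (y j) (t j) < δ / 4 → δ / 2 ≤ dist (t (j + 1)) (y j))
    (hz : ∀ N, (∀ j ≥ N, δ / 4 ≤ dist (y j) (t j)) → z = t N) :
    ¬ Tendsto y atTop (𝓝 z) := by
  intro hy
  obtain ⟨M, hM⟩ := Metric.tendsto_atTop.1 hy (δ / 8) (by positivity)
  have hfrozen : ∀ N, (∀ j ≥ N, δ / 4 ≤ dist (y j) (t j)) → ∀ j ≥ N, t j = t N := by
    intro N hN j hj
    induction j, hj using Nat.le_induction with
    | base => rfl
    | succ j hNj ih => rw [hstay j (hN j hNj), ih]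
  -- once the `y j` are `δ / 4`-close to each other, a single jump freezes the target for good
  obtain ⟨N, hN⟩ : ∃ N, ∀ j ≥ N, δ / 4 ≤ dist (y j) (t j) := by
    by_cases h : ∃ j ≥ M, dist (y j) (t j) < δ / 4
    · obtain ⟨j, hjM, hj⟩ := h
      have hfar : ∀ i ≥ M, t i = t (j + 1) → δ / 4 ≤ dist (y i) (t i) := fun i hi hti => by
        rw [hti, dist_comm]
        linarith [hjump j hj, dist_triangle (t (j + 1)) (y i) (y j),
          dist_triangle_right (y i) (y j) z, hM i hi, hM j hjM]
      have hstable : ∀ i ≥ j + 1, t i = t (j + 1) := by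
        intro i hi
        induction i, hi using Nat.le_induction with
        | base => rfl
        | succ i hji ih => rw [hstay i (hfar i (by omega) ih), ih]
      exact ⟨j + 1, fun i hi => hfar i (by omega) (hstable i hi)⟩
    · push Not at h
      exact ⟨M, h⟩
  have hfar := hN (max N M) (le_max_left _ _)
  have hnear := hM (max N M) (le_max_right _ _)
  rw [hz N hN, ← hfrozen N hN (max N M) (le_max_left _ _)] at hnear
  linarith

section Tree

variable {X Y : Type*} [TopologicalSpace X] [PseudoMetricSpace Y] {f : X → Y}
  {τ : List Y → Set X} {hτ : IsWinningI f τ}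

namespace IsWinningI.SplitData

variable (D : SplitData hτ)

def Admissible (q : ℕ → X) : Prop :=
  EqOn q D.base (Iio D.len) ∧ hτ.Guided D.level q (Ici D.len)

variable {D}

theorem Admissible.of_eqOn {q r : ℕ → X} {m : ℕ} (hq : D.Admissible q) (hm : D.len ≤ m)
    (hr : EqOn r q (Iio m)) (hg : hτ.Guided D.level r (Ici m)) : D.Admissible r := by
  refine ⟨(hr.mono (Iio_subset_Iio hm)).trans hq.1, ?_⟩
  rw [← Ico_union_Ici_eq_Ici hm]
  exact ((hq.2.mono Ico_subset_Ici_self).congr hr.symm).union hg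

variable (D)

theorem exists_branches (q : ℕ → X) (m : ℕ) :
    ∃ r : Bool → ℕ → X, (∀ b, EqOn (r b) q (Iio m)) ∧
      (D.Admissible q → D.len < m → (∀ b, D.Admissible (r b)) ∧
        D.gap < dist (f (hτ.limitPt (r true))) (f (hτ.limitPt (r false)))) := by
  by_cases h : D.Admissible q ∧ D.len < m
  · obtain ⟨_, ⟨r₁, ⟨hr₁, hg₁⟩, rfl⟩, _, ⟨r₂, ⟨hr₂, hg₂⟩, rfl⟩, hgap⟩ :=
      D.split q h.1.1 h.1.2 m h.2
    exact ⟨fun b => bif b then r₁ else r₂, Bool.forall_bool.2 ⟨hr₂, hr₁⟩, fun hq hm =>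
      ⟨Bool.forall_bool.2 ⟨hq.of_eqOn hm.le hr₂ hg₂, hq.of_eqOn hm.le hr₁ hg₁⟩, hgap⟩⟩
  · exact ⟨fun _ => q, fun _ => eqOn_refl _ _, fun hq hm => absurd ⟨hq, hm⟩ h⟩

noncomputable def branch (q : ℕ → X) (m : ℕ) : Bool → ℕ → X :=
  (D.exists_branches q m).choose

theorem branch_eqOn (q : ℕ → X) (m : ℕ) (b : Bool) : EqOn (D.branch q m b) q (Iio m) :=
  (D.exists_branches q m).choose_spec.1 b

theorem Admissible.branch {D : SplitData hτ} {q : ℕ → X} {m : ℕ} (hq : D.Admissible q)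
    (hm : D.len < m) (b : Bool) : D.Admissible (D.branch q m b) :=
  ((D.exists_branches q m).choose_spec.2 hq hm).1 b

theorem gap_lt_dist_branch {q : ℕ → X} {m : ℕ} (hq : D.Admissible q) (hm : D.len < m) :
    D.gap < dist (f (hτ.limitPt (D.branch q m true))) (f (hτ.limitPt (D.branch q m false))) :=
  ((D.exists_branches q m).choose_spec.2 hq hm).2

-- Step `j` splits at `len + 1 + j`, strictly beyond `len`, where `split` applies.
noncomputable def step (q : ℕ → X) (j : ℕ) (a : Bool × Bool) : ℕ → X :=
  if a.1 then D.branch q (D.len + 1 + j) a.2 else q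

theorem step_eqOn (q : ℕ → X) (j : ℕ) (a : Bool × Bool) :
    EqOn (D.step q j a) q (Iio (D.len + 1 + j)) := by
  unfold step
  split_ifs
  exacts [D.branch_eqOn _ _ _, eqOn_refl _ _]

theorem Admissible.step {D : SplitData hτ} {q : ℕ → X} (hq : D.Admissible q) (j : ℕ)
    (a : Bool × Bool) :
    D.Admissible (D.step q j a) := by
  unfold SplitData.step
  split_ifs
  exacts [hq.branch (by omega) _, hq]

noncomputable def start : ℕ → X :=
  (hτ.exists_guided D.level D.base D.len).choose

theorem admissible_start : D.Admissible D.start :=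
  (hτ.exists_guided D.level D.base D.len).choose_spec

noncomputable def codeState (α : ℕ → Bool × Bool) : ℕ → ℕ → X
  | 0 => D.start
  | j + 1 => D.step (codeState α j) j (α j)

noncomputable def codeRun (α : ℕ → Bool × Bool) : ℕ → X :=
  fun i => D.codeState α (i + 1) i

noncomputable def point (α : ℕ → Bool × Bool) : X :=
  hτ.limitPt (D.codeRun α)

def compactSet : Set X :=
  range D.point

theorem admissible_codeState (α : ℕ → Bool × Bool) (j : ℕ) :
    D.Admissible (D.codeState α j) := by
  induction j with
  | zero => exact D.admissible_start
  | succ j ih => exact ih.step j (α j)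

theorem codeState_congr {α α' : ℕ → Bool × Bool} {j : ℕ} (h : EqOn α α' (Iio j)) :
    D.codeState α j = D.codeState α' j := by
  induction j with
  | zero => rfl
  | succ j ih =>
    rw [codeState, codeState, ih (h.mono (Iio_subset_Iio j.le_succ)), h (Nat.lt_succ_self j)]

theorem codeRun_eqOn (α : ℕ → Bool × Bool) (j : ℕ) :
    EqOn (D.codeRun α) (D.codeState α j) (Iio (D.len + 1 + j)) :=
  eqOn_diag_of_forall_eqOn_succ (fun _ _ h => by omega) (fun j => D.step_eqOn _ j _) j

theorem point_mem_movesI (α : ℕ → Bool × Bool) (j : ℕ) :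
    D.point α ∈ movesI τ f (D.codeState α j) (D.len + 1 + j) := by
  rw [← movesI_congr (D.codeRun_eqOn α j)]
  exact hτ.limitPt_mem_movesI _ _

theorem isCompact_compactSet : IsCompact D.compactSet :=
  isCompact_range <| hτ.continuous_limitPt_comp fun _ _ _ h i hi =>
    congrFun (D.codeState_congr (h.mono (Iio_subset_Iio (Nat.succ_le_of_lt hi)))) i

noncomputable def letter (q : ℕ → X) (j : ℕ) (v : Y) : Bool × Bool :=
  (decide (dist v (f (hτ.limitPt q)) < D.gap / 4),
    decide (D.gap / 2 ≤ dist (f (hτ.limitPt (D.branch q (D.len + 1 + j) true))) v))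

noncomputable def playState (y : ℕ → Y) : ℕ → ℕ → X
  | 0 => D.start
  | j + 1 => D.step (playState y j) j (D.letter (playState y j) j (y j))

noncomputable def code (y : ℕ → Y) (j : ℕ) : Bool × Bool :=
  D.letter (D.playState y j) j (y j)

theorem codeState_code (y : ℕ → Y) (j : ℕ) : D.codeState (D.code y) j = D.playState y j := by
  induction j with
  | zero => rfl
  | succ j ih => rw [codeState, ih]; rfl

theorem playState_congr {y y' : ℕ → Y} {j : ℕ} (h : EqOn y y' (Iio j)) :
    D.playState y j = D.playState y' j := by
  induction j with
  | zero => rfl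
  | succ j ih =>
    rw [playState, playState, ih (h.mono (Iio_subset_Iio j.le_succ)), h (Nat.lt_succ_self j)]

theorem playState_succ_of_le {y : ℕ → Y} {j : ℕ}
    (h : D.gap / 4 ≤ dist (y j) (f (hτ.limitPt (D.playState y j)))) :
    D.playState y (j + 1) = D.playState y j := by
  simp [playState, step, letter, not_lt.2 h]

theorem le_dist_playState_succ {y : ℕ → Y} {j : ℕ}
    (h : dist (y j) (f (hτ.limitPt (D.playState y j))) < D.gap / 4) :
    D.gap / 2 ≤ dist (f (hτ.limitPt (D.playState y (j + 1)))) (y j) := by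
  have hq : D.Admissible (D.playState y j) :=
    D.codeState_code y j ▸ D.admissible_codeState _ j
  have hgap := D.gap_lt_dist_branch hq (by omega : D.len < D.len + 1 + j)
  simp only [playState, step, letter, h, decide_true, if_true]
  set q := D.playState y j
  by_cases hb : D.gap / 2 ≤ dist (f (hτ.limitPt (D.branch q (D.len + 1 + j) true))) (y j)
  · simp [hb]
  · simp only [hb, decide_false]
    linarith [dist_triangle_right (f (hτ.limitPt (D.branch q (D.len + 1 + j) true)))
      (f (hτ.limitPt (D.branch q (D.len + 1 + j) false))) (y j)]

theorem codeRun_code_eq {y : ℕ → Y} {N : ℕ}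
    (hN : ∀ j ≥ N, D.gap / 4 ≤ dist (y j) (f (hτ.limitPt (D.playState y j)))) :
    D.codeRun (D.code y) = D.playState y N := by
  have hfrozen : ∀ j ≥ N, D.playState y j = D.playState y N := by
    intro j hj
    induction j, hj using Nat.le_induction with
    | base => rfl
    | succ j hNj ih => rw [D.playState_succ_of_le (hN j hNj), ih]
  funext i
  rw [D.codeRun_eqOn _ (N + i) (by simp only [mem_Iio]; omega), D.codeState_code,
    hfrozen _ (Nat.le_add_right N i)]

theorem exists_isWinningI_restrict :
    ∃ τ' : List Y → Set D.compactSet, IsWinningI (D.compactSet.restrict f) τ' := by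
  have := hτ.nonempty.map f
  refine exists_isWinningI_of_seq
    (fun y j => Subtype.val ⁻¹' movesI τ f (D.playState y j) (D.len + 1 + j))
    (fun y y' j h => by rw [D.playState_congr h])
    (fun y j => (hτ.isOpen_movesI _ _).preimage continuous_subtype_val)
    (fun y j => ⟨⟨D.point (D.code y), mem_range_self _⟩,
      D.codeState_code y j ▸ D.point_mem_movesI (D.code y) j⟩)
    (fun y j => preimage_mono <| (hτ.movesI_succ_subset _ _).trans
      (movesI_congr (D.step_eqOn _ _ _)).subset)
    fun y _ => ⟨⟨D.point (D.code y), mem_range_self _⟩, ?_, ?_⟩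
  · have hmoves : ∀ j, movesI τ f (D.playState y j) (D.len + 1 + j) =
        movesI τ f (D.codeRun (D.code y)) (D.len + 1 + j) := fun j => by
      rw [movesI_congr (D.codeRun_eqOn _ j), D.codeState_code]
    simp only [hmoves]
    exact ((hτ.limitPt_spec (D.codeRun (D.code y))).1.comp_add (D.len + 1)).preimage
      (IsInducing.subtypeVal (t := D.compactSet))
  · exact not_tendsto_of_escape D.gap_pos (fun j h => by rw [D.playState_succ_of_le h])
      (fun j h => D.le_dist_playState_succ h)
      fun N hN => congrArg (f ∘ hτ.limitPt) (D.codeRun_code_eq hN)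

end IsWinningI.SplitData

end Tree

theorem playerI_winning_restrict_compact_general {X Y : Type*}
    [TopologicalSpace X] [TopologicalSpace Y]
    [MetrizableSpace Y]
    (f : X → Y) (τ : List Y → Set X) (hτ : IsWinningI f τ) :
    ∃ K : Set X, IsCompact K ∧
      ∃ τ' : List Y → Set K, IsWinningI (K.restrict f) τ' := by
  let := metrizableSpaceMetric Y
  obtain ⟨D⟩ := hτ.nonempty_splitData
  exact ⟨D.compactSet, D.isCompact_compactSet, D.exists_isWinningI_restrict⟩

/-- If Player I has a winning strategy in `G(f)`, then there exists a compact `K ⊆ X`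
such that Player I has a winning strategy in `G(f↾K)`, where `f↾K : K → Y` is the
restriction of `f` to `K` with the subspace topology. -/
theorem playerI_winning_restrict_compact {X Y : Type*}
    [TopologicalSpace X] [TopologicalSpace Y]
    [SeparableSpace X] [MetrizableSpace X] [SeparableSpace Y] [MetrizableSpace Y]
    (f : X → Y) (τ : List Y → Set X) (hτ : IsWinningI f τ) :
    ∃ K : Set X, IsCompact K ∧
      ∃ τ' : List Y → Set K, IsWinningI (K.restrict f) τ' :=
  playerI_winning_restrict_compact_general f τ hτ
end

section
/- Every nonempty separable metrizable space X is the image of a subset of the Baire space ℕ^ℕ under a closed continuous surjection; that is, there exist X' ⊆ ℕ^ℕ and a continuous surjection g : X' → X (X' with the subspace topology) such that the image under g of every closed subset of X' is closed in X. -/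
open TopologicalSpace Set Filter Metric Topology

/-- Auxiliary: in a nonempty separable metric space, for every `ε > 0` there is a countable
locally finite open cover by sets on whose closures distances are at most `ε`. -/
lemma exists_good_cover_aux {X : Type*} [MetricSpace X] [SecondCountableTopology X]
    [Nonempty X] {ε : ℝ} (hε : 0 < ε) :
    ∃ u : ℕ → Set X, (∀ k, IsOpen (u k)) ∧ (∀ x, ∃ k, x ∈ u k) ∧ LocallyFinite u ∧
      ∀ k, ∀ x ∈ closure (u k), ∀ y ∈ closure (u k), dist x y ≤ ε := by
  -- precise locally finite refinement of the cover by balls of radius ε/2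
  obtain ⟨v, vo, vU, vlf, vsub⟩ :=
    precise_refinement (fun c : X => Metric.ball c (ε / 2)) (fun c => Metric.isOpen_ball)
      (by
        apply eq_univ_of_forall; intro x
        exact mem_iUnion.2 ⟨x, Metric.mem_ball_self (by linarith)⟩)
  -- the set of indices with nonempty sets is countable
  have hS : {c : X | (v c).Nonempty}.Countable := by
    choose W hW hWf using vlf
    obtain ⟨T, hTc, hTU⟩ := LindelofSpace.elim_nhds_subcover W hW
    have hsub : {c : X | (v c).Nonempty} ⊆ ⋃ t ∈ T, {c : X | (v c ∩ W t).Nonempty} := by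
      rintro c ⟨z, hz⟩
      have : z ∈ ⋃ t ∈ T, W t := hTU ▸ mem_univ z
      obtain ⟨t, htT, hzt⟩ := mem_iUnion₂.1 this
      exact mem_iUnion₂.2 ⟨t, htT, z, hz, hzt⟩
    exact (hTc.biUnion fun t _ => (hWf t).countable).mono hsub
  -- an injection of the nonempty indices into ℕ
  obtain ⟨e, he⟩ := Set.countable_iff_exists_injective.1 hS
  classical
  refine ⟨fun k => ⋃ (c : {c : X | (v c).Nonempty}) (_ : e c = k), v c, ?_, ?_, ?_, ?_⟩
  · exact fun k => isOpen_iUnion fun c => isOpen_iUnion fun _ => vo c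
  · intro x
    have : x ∈ ⋃ c, v c := vU ▸ mem_univ x
    obtain ⟨c, hc⟩ := mem_iUnion.1 this
    exact ⟨e ⟨c, ⟨x, hc⟩⟩, mem_iUnion.2 ⟨⟨c, ⟨x, hc⟩⟩, mem_iUnion.2 ⟨rfl, hc⟩⟩⟩
  · intro x
    obtain ⟨W, hW, hWf⟩ := vlf x
    refine ⟨W, hW, ?_⟩
    have : {k | ((⋃ (c : {c : X | (v c).Nonempty}) (_ : e c = k), v c) ∩ W).Nonempty} ⊆
        e '' {c : {c : X | (v c).Nonempty} | (v c ∩ W).Nonempty} := by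
      rintro k ⟨z, hz, hzW⟩
      obtain ⟨c, hc⟩ := mem_iUnion.1 hz
      obtain ⟨hck, hzc⟩ := mem_iUnion.1 hc
      exact ⟨c, ⟨z, hzc, hzW⟩, hck⟩
    refine Finite.subset (Finite.image e ?_) this
    exact (hWf.preimage (Subtype.val_injective.injOn)).subset fun c hc => hc
  · intro k x hx y hy
    by_cases h : ∃ c : {c : X | (v c).Nonempty}, e c = k
    · obtain ⟨c, hck⟩ := h
      have husub : (⋃ (c' : {c : X | (v c).Nonempty}) (_ : e c' = k), v c') ⊆
          Metric.ball (c : X) (ε / 2) := by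
        refine iUnion₂_subset fun c' hc' => ?_
        have hcc : c' = c := he (hc'.trans hck.symm)
        subst hcc
        exact vsub (c' : X)
      have hclo := closure_minimal (husub.trans Metric.ball_subset_closedBall)
        Metric.isClosed_closedBall
      have hxc := Metric.mem_closedBall.1 (hclo hx)
      have hyc := Metric.mem_closedBall.1 (hclo hy)
      calc dist x y ≤ dist x (c : X) + dist (c : X) y := dist_triangle _ _ _
        _ ≤ ε / 2 + ε / 2 := add_le_add hxc (by rw [dist_comm]; exact hyc)
        _ = ε := by ring
    · have : (⋃ (c : {c : X | (v c).Nonempty}) (_ : e c = k), v c) = ∅ := by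
        simp only [iUnion_eq_empty]
        intro c hck
        exact absurd ⟨c, hck⟩ h
      simp only [this, closure_empty] at hx
      exact absurd hx (Set.notMem_empty x)

/-- Every nonempty separable metrizable space is the image of a subset of the Baire
space `ℕ^ℕ` under a closed continuous surjection. -/
theorem exists_closed_continuous_surjection_from_subset_baireSpace
    {X : Type*} [TopologicalSpace X] [SeparableSpace X] [MetrizableSpace X]
    [Nonempty X] :
    ∃ (X' : Set (ℕ → ℕ)) (g : X' → X), Continuous g ∧ Function.Surjective g ∧
      ∀ F : Set X', IsClosed F → IsClosed (g '' F) := by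
  letI : MetricSpace X := TopologicalSpace.metrizableSpaceMetric X
  haveI : SecondCountableTopology X := UniformSpace.secondCountable_of_separable X
  have hcov : ∀ n : ℕ, ∃ u : ℕ → Set X, (∀ k, IsOpen (u k)) ∧ (∀ x, ∃ k, x ∈ u k) ∧
      LocallyFinite u ∧ ∀ k, ∀ x ∈ closure (u k), ∀ y ∈ closure (u k),
        dist x y ≤ (2 : ℝ)⁻¹ ^ n :=
    fun n => exists_good_cover_aux (by positivity)
  choose u uo ucov ulf udiam using hcov
  set X' : Set (ℕ → ℕ) := {f | ∃ x, ∀ n, x ∈ closure (u n (f n))} with hX'def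
  have huniq : ∀ (v : ℕ → ℕ) (x y : X), (∀ n, x ∈ closure (u n (v n))) →
      (∀ n, y ∈ closure (u n (v n))) → x = y := by
    intro v x y hx hy
    have hle : ∀ n, dist x y ≤ (2 : ℝ)⁻¹ ^ n := fun n => udiam n (v n) x (hx n) y (hy n)
    have h0 : dist x y ≤ 0 :=
      ge_of_tendsto' (tendsto_pow_atTop_nhds_zero_of_lt_one (by norm_num) (by norm_num)) hle
    exact dist_le_zero.1 h0
  have hmem : ∀ f : X', ∃ x, ∀ n, x ∈ closure (u n (f.1 n)) := fun f => f.2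
  choose g hg using hmem
  refine ⟨X', g, ?_, ?_, ?_⟩
  · rw [continuous_iff_continuousAt]
    intro f
    rw [ContinuousAt, Metric.tendsto_nhds]
    intro ε hε
    obtain ⟨n, hn⟩ := exists_pow_lt_of_lt_one hε (by norm_num : (2 : ℝ)⁻¹ < 1)
    have hopen : IsOpen {f' : X' | f'.1 n = f.1 n} := by
      have hc : Continuous fun f' : X' => f'.1 n :=
        (continuous_apply n).comp continuous_subtype_val
      exact hc.isOpen_preimage {f.1 n} (isOpen_discrete _)
    filter_upwards [hopen.mem_nhds rfl] with f' hf'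
    have h1 : g f' ∈ closure (u n (f.1 n)) := by
      rw [← hf']; exact hg f' n
    calc dist (g f') (g f) ≤ (2 : ℝ)⁻¹ ^ n := udiam n (f.1 n) _ h1 _ (hg f n)
      _ < ε := hn
  · intro x
    choose f hf using fun n => ucov n x
    have hfX' : f ∈ X' := ⟨x, fun n => subset_closure (hf n)⟩
    exact ⟨⟨f, hfX'⟩,
      huniq f (g ⟨f, hfX'⟩) x (hg ⟨f, hfX'⟩) (fun n => subset_closure (hf n))⟩
  · intro F hF
    apply IsSeqClosed.isClosed
    intro y x hy hyx
    choose φ hφF hφg using hy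
    set 𝒰 : Ultrafilter ℕ := Ultrafilter.of Filter.atTop with h𝒰
    have hle : (𝒰 : Filter ℕ) ≤ Filter.atTop := Ultrafilter.of_le _
    have hyx𝒰 : Filter.Tendsto y 𝒰 (𝓝 x) := hyx.mono_left hle
    have hkey : ∀ n : ℕ, ∃ k, {j | (φ j).1 n = k} ∈ 𝒰 := by
      intro n
      obtain ⟨W, hW, hWf⟩ := ulf n x
      have hWmem : {j | y j ∈ interior W} ∈ 𝒰 := hyx𝒰 (interior_mem_nhds.2 hW)
      have hsub : {j | y j ∈ interior W} ⊆
          ⋃ k ∈ {k | (u n k ∩ W).Nonempty}, {j | (φ j).1 n = k} := by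
        intro j hj
        have hyc : y j ∈ closure (u n ((φ j).1 n)) := by
          rw [← hφg j]; exact hg (φ j) n
        obtain ⟨z, hz1, hz2⟩ := mem_closure_iff.1 hyc _ isOpen_interior hj
        exact mem_iUnion₂.2 ⟨(φ j).1 n, ⟨z, hz2, interior_subset hz1⟩, rfl⟩
      have hU : (⋃ k ∈ {k | (u n k ∩ W).Nonempty}, {j | (φ j).1 n = k}) ∈ 𝒰 :=
        Filter.mem_of_superset hWmem hsub
      obtain ⟨k, _, hk2⟩ := (Ultrafilter.finite_biUnion_mem_iff hWf).1 hU
      exact ⟨k, hk2⟩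
    choose h hh using hkey
    have hx : ∀ n, x ∈ closure (u n (h n)) := by
      intro n
      apply isClosed_closure.mem_of_tendsto hyx𝒰
      filter_upwards [hh n] with j hj
      rw [← hj, ← hφg j]
      exact hg (φ j) n
    have hX' : h ∈ X' := ⟨x, hx⟩
    have htend : Filter.Tendsto φ 𝒰 (𝓝 (⟨h, hX'⟩ : X')) := by
      rw [tendsto_subtype_rng, tendsto_pi_nhds]
      intro n
      exact tendsto_nhds_of_eventually_eq (hh n)
    have hHF : (⟨h, hX'⟩ : X') ∈ F :=
      hF.mem_of_tendsto htend (Filter.Eventually.of_forall hφF)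
    exact ⟨⟨h, hX'⟩, hHF, huniq h _ x (hg ⟨h, hX'⟩) hx⟩
end
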